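/- arXiv:2502.07520 — 6 statements merged into one kernel-verified Lean document; each statement's English description precedes it below -/
import Mathlib

section
/- For every integer p ≥ 1 and all integers n ≥ 0 and k ≥ 0, the number c_k(Γ^p_n) of induced subgraphs of the Fibonacci p-cube Γ^p_n isomorphic to the hypercube Q_k equals Σ_{i=k}^{⌊(n+p)/(p+1)⌋} C(n − ip + p, i)·C(i, k). -/
/-- Fibonacci `p`-numbers: `F^p_0 = 0`, `F^p_m = 1` for `1 ≤ m ≤ p`,
and `F^p_m = F^p_{m-1} + F^p_{m-p-1}` for `m ≥ p+1`. -/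
def fibP (p : ℕ) : ℕ → ℕ
  | 0 => 0
  | m + 1 => if m + 1 ≤ p then 1 else fibP p m + fibP p (m - p)

/-- A Fibonacci `p`-string of length `n`: any two `1`s are separated by at least `p` `0`s. -/
def IsFibStr (p : ℕ) {n : ℕ} (u : Fin n → Bool) : Prop :=
  ∀ i j : Fin n, u i = true → u j = true → (i : ℕ) < (j : ℕ) → (i : ℕ) + p + 1 ≤ (j : ℕ)

instance (p n : ℕ) : DecidablePred fun u : Fin n → Bool => IsFibStr p u := fun u =>
  decidable_of_iff
    (∀ i j : Fin n, u i = true → u j = true → (i : ℕ) < (j : ℕ) → (i : ℕ) + p + 1 ≤ (j : ℕ))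
    Iff.rfl

/-- Hamming weight of a binary string. -/
def wt {n : ℕ} (u : Fin n → Bool) : ℕ := (Finset.univ.filter fun i => u i = true).card

/-- The Fibonacci `p`-cube `Γ^p_n`. -/
def FibCube (p n : ℕ) : SimpleGraph {u : Fin n → Bool // IsFibStr p u} where
  Adj u v := (Finset.univ.filter fun i => u.1 i ≠ v.1 i).card = 1
  symm := by
    constructor
    intro u v h
    have : (Finset.univ.filter fun i => v.1 i ≠ u.1 i)
        = (Finset.univ.filter fun i => u.1 i ≠ v.1 i) := by
      apply Finset.filter_congr
      intro i _
      simp [ne_comm]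
    rw [this]
    exact h
  loopless := by constructor; intro u h; simp at h

instance (p n : ℕ) : DecidableRel (FibCube p n).Adj := fun u v =>
  decidable_of_iff ((Finset.univ.filter fun i => u.1 i ≠ v.1 i).card = 1) Iff.rfl

/-- `c_k(Γ^p_n)`: induced `Q_k`-subgraphs, encoded as pairs (bottom, top). -/
noncomputable def cubeCount (p n k : ℕ) : ℕ :=
  Nat.card {bt : (Fin n → Bool) × (Fin n → Bool) //
    IsFibStr p bt.1 ∧ IsFibStr p bt.2 ∧ (∀ i, bt.1 i = true → bt.2 i = true) ∧
    (Finset.univ.filter fun i => bt.1 i ≠ bt.2 i).card = k}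

/-- `c_{k,d}(Γ^p_n)`: induced `Q_k`-subgraphs with bottom vertex of weight `d`. -/
noncomputable def cubeCountD (p n k d : ℕ) : ℕ :=
  Nat.card {bt : (Fin n → Bool) × (Fin n → Bool) //
    IsFibStr p bt.1 ∧ IsFibStr p bt.2 ∧ (∀ i, bt.1 i = true → bt.2 i = true) ∧
    (Finset.univ.filter fun i => bt.1 i ≠ bt.2 i).card = k ∧ wt bt.1 = d}

/-- Weight enumerator polynomial of `Γ^p_n`. -/
noncomputable def weightPoly (p n : ℕ) : Polynomial ℤ :=
  ∑ u : {u : Fin n → Bool // IsFibStr p u}, Polynomial.X ^ wt u.1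

/-- Distance cube polynomial of `Γ^p_n`, in variables `X 0 = x` and `X 1 = q`. -/
noncomputable def distCubePoly (p n : ℕ) : MvPolynomial (Fin 2) ℤ :=
  ∑ k ∈ Finset.range (n + 1), ∑ d ∈ Finset.range (n + 1),
    (cubeCountD p n k d : MvPolynomial (Fin 2) ℤ) *
      MvPolynomial.X 0 ^ k * MvPolynomial.X 1 ^ d

/-- Flip coordinate `j` of a binary string (`u + δ_j`). -/
def flipCoord {n : ℕ} (u : Fin n → Bool) (j : Fin n) : Fin n → Bool :=
  Function.update u j (!u j)

def gapSets (p n : ℕ) : Finset (Finset ℕ) :=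
  (Finset.range n).powerset.filter fun T => ∀ a ∈ T, ∀ b ∈ T, a < b → a + p + 1 ≤ b

lemma mem_gapSets {p n : ℕ} {T : Finset ℕ} :
    T ∈ gapSets p n ↔ (∀ x ∈ T, x < n) ∧ ∀ a ∈ T, ∀ b ∈ T, a < b → a + p + 1 ≤ b := by
  simp [gapSets, Finset.subset_iff]

lemma gap_zero (p n : ℕ) : ((gapSets p n).filter (·.card = 0)).card = 1 := by
  have : (gapSets p n).filter (·.card = 0) = {∅} := by
    ext T
    simp only [Finset.mem_filter, Finset.mem_singleton, Finset.card_eq_zero]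
    constructor
    · rintro ⟨-, h⟩; exact h
    · rintro rfl
      refine ⟨mem_gapSets.2 ⟨?_, ?_⟩, rfl⟩ <;> simp
  rw [this]; rfl

lemma gap_rec (p n i : ℕ) :
    ((gapSets p (n + 1)).filter (·.card = i + 1)).card
      = ((gapSets p n).filter (·.card = i + 1)).card
        + ((gapSets p (n - p)).filter (·.card = i)).card := by
  rw [← Finset.card_filter_add_card_filter_not (p := fun T => n ∉ T),
    Finset.filter_filter, Finset.filter_filter]
  congr 1
  · congr 1
    ext T
    simp only [Finset.mem_filter, mem_gapSets]
    constructor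
    · rintro ⟨⟨h1, h2⟩, hc, hn⟩
      refine ⟨⟨fun x hx => ?_, h2⟩, hc⟩
      have hx1 := h1 x hx
      have hx2 : x ≠ n := fun h => hn (h ▸ hx)
      omega
    · rintro ⟨⟨h1, h2⟩, hc⟩
      exact ⟨⟨fun x hx => Nat.lt_succ_of_lt (h1 x hx), h2⟩, hc,
        fun hn => absurd (h1 n hn) (lt_irrefl n)⟩
  · refine Finset.card_bij' (fun T _ => T.erase n) (fun S _ => insert n S)
      ?_ ?_ ?_ ?_
    · rintro T hT
      simp only [Finset.mem_filter, mem_gapSets, not_not] at hT ⊢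
      obtain ⟨⟨h1, h2⟩, hc, hn⟩ := hT
      refine ⟨⟨fun x hx => ?_, fun a ha b hb hab => ?_⟩, ?_⟩
      · rw [Finset.mem_erase] at hx
        obtain ⟨hxn, hxT⟩ := hx
        have hx' := h1 x hxT
        have hlt : x < n := by omega
        have := h2 x hxT n hn hlt
        omega
      · exact h2 a (Finset.mem_of_mem_erase ha) b (Finset.mem_of_mem_erase hb) hab
      · rw [Finset.card_erase_of_mem hn, hc]; omega
    · rintro S hS
      simp only [Finset.mem_filter, mem_gapSets, not_not] at hS ⊢
      obtain ⟨⟨h1, h2⟩, hc⟩ := hS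
      have hnS : n ∉ S := fun h => by have := h1 n h; omega
      refine ⟨⟨fun x hx => ?_, fun a ha b hb hab => ?_⟩, ?_, Finset.mem_insert_self n S⟩
      · rcases Finset.mem_insert.1 hx with rfl | hx
        · omega
        · have := h1 x hx; omega
      · rcases Finset.mem_insert.1 ha with ha' | ha'
        · rcases Finset.mem_insert.1 hb with hb' | hb'
          · omega
          · have := h1 b hb'; omega
        · rcases Finset.mem_insert.1 hb with hb' | hb'
          · have := h1 a ha'; omega
          · exact h2 a ha' b hb' hab
      · rw [Finset.card_insert_of_notMem hnS, hc]
    · rintro T hT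
      simp only [Finset.mem_filter, not_not] at hT
      exact Finset.insert_erase hT.2.2
    · rintro S hS
      simp only [Finset.mem_filter, mem_gapSets] at hS
      have hnS : n ∉ S := fun h => by have := hS.1.1 n h; omega
      exact Finset.erase_insert hnS

lemma gap_count (p n i : ℕ) :
    ((gapSets p n).filter (·.card = i)).card = (n + p - i * p).choose i := by
  induction n using Nat.strong_induction_on generalizing i with
  | _ n IH =>
    match n, i with
    | 0, 0 => rw [gap_zero]; simp
    | 0, i + 1 =>
      have h0 : (gapSets p 0).filter (·.card = i + 1) = ∅ := by
        ext T
        simp only [Finset.mem_filter, mem_gapSets, Finset.notMem_empty, iff_false,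
          not_and]
        rintro ⟨h1, -⟩ hc
        have : T = ∅ := Finset.eq_empty_of_forall_notMem fun x hx => by
          have := h1 x hx; omega
        rw [this] at hc
        simp at hc
      rw [h0, Finset.card_empty]
      have h2 : 0 + p - (i + 1) * p = 0 := by
        have : p ≤ (i + 1) * p := Nat.le_mul_of_pos_left p (Nat.succ_pos i)
        omega
      rw [h2, Nat.choose_eq_zero_of_lt (Nat.succ_pos i)]
    | n + 1, 0 => rw [gap_zero]; simp
    | n + 1, i + 1 =>
      rw [gap_rec, IH n (Nat.lt_succ_self n), IH (n - p) (by omega)]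
      obtain ⟨q, hq⟩ : ∃ q, q = i * p := ⟨_, rfl⟩
      have hq2 : (i + 1) * p = q + p := by rw [add_one_mul, hq]
      rw [hq2, ← hq]
      by_cases h : q + p ≤ n + p
      · have e1 : n + 1 + p - (q + p) = (n + p - (q + p)) + 1 := by omega
        rw [e1, Nat.choose_succ_succ]
        have hB : (n - p + p - q).choose i = (n + p - (q + p)).choose i := by
          by_cases hnp : p ≤ n
          · congr 1; omega
          · rcases Nat.eq_zero_or_pos i with rfl | hi
            · simp
            · exfalso
              have hpq : p ≤ q := by
                rw [hq]
                calc p = 1 * p := (one_mul p).symm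
                _ ≤ i * p := Nat.mul_le_mul_right p hi
              omega
        rw [hB]
        exact Nat.add_comm _ _
      · have h1 : n + p - (q + p) < i + 1 := by omega
        have h2 : n + 1 + p - (q + p) < i + 1 := by omega
        rw [Nat.choose_eq_zero_of_lt h1, Nat.choose_eq_zero_of_lt h2]
        rcases Nat.eq_zero_or_pos i with rfl | hi
        · exfalso; omega
        · have hpq : p ≤ q := by
            rw [hq]
            calc p = 1 * p := (one_mul p).symm
            _ ≤ i * p := Nat.mul_le_mul_right p hi
          have h3 : n - p + p - q < i := by omega
          rw [Nat.choose_eq_zero_of_lt h3]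

def onesF {n : ℕ} (u : Fin n → Bool) : Finset ℕ :=
  (Finset.univ.filter fun i => u i = true).image Fin.val

lemma mem_onesF {n : ℕ} (u : Fin n → Bool) (i : Fin n) :
    (i : ℕ) ∈ onesF u ↔ u i = true := by
  simp only [onesF, Finset.mem_image, Finset.mem_filter, Finset.mem_univ, true_and]
  constructor
  · rintro ⟨j, hj, hji⟩
    rwa [Fin.val_injective hji] at hj
  · intro h; exact ⟨i, h, rfl⟩

lemma mem_onesF_lt {n : ℕ} (u : Fin n → Bool) {x : ℕ} (hx : x ∈ onesF u) : x < n := by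
  simp only [onesF, Finset.mem_image] at hx
  obtain ⟨j, -, rfl⟩ := hx
  exact j.isLt

def diffF {n : ℕ} (bt : (Fin n → Bool) × (Fin n → Bool)) : Finset ℕ :=
  (Finset.univ.filter fun i => bt.1 i ≠ bt.2 i).image Fin.val

lemma mem_diffF {n : ℕ} (bt : (Fin n → Bool) × (Fin n → Bool)) (i : Fin n) :
    (i : ℕ) ∈ diffF bt ↔ bt.1 i ≠ bt.2 i := by
  simp only [diffF, Finset.mem_image, Finset.mem_filter, Finset.mem_univ, true_and]
  constructor
  · rintro ⟨j, hj, hji⟩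
    rwa [Fin.val_injective hji] at hj
  · intro h; exact ⟨i, h, rfl⟩

lemma card_filter_val_mem {n : ℕ} (D : Finset ℕ) (hD : ∀ x ∈ D, x < n) :
    (Finset.univ.filter fun i : Fin n => (i : ℕ) ∈ D).card = D.card := by
  rw [← Finset.card_image_of_injective _ Fin.val_injective]
  congr 1
  ext x
  simp only [Finset.mem_image, Finset.mem_filter, Finset.mem_univ, true_and]
  constructor
  · rintro ⟨i, hi, rfl⟩; exact hi
  · intro hx; exact ⟨⟨x, hD x hx⟩, hx, rfl⟩

lemma pairs_card (p n k : ℕ) :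
    ((Finset.univ : Finset ((Fin n → Bool) × (Fin n → Bool))).filter fun bt : (Fin n → Bool) × (Fin n → Bool) =>
      IsFibStr p bt.1 ∧ IsFibStr p bt.2 ∧ (∀ i, bt.1 i = true → bt.2 i = true) ∧
        (Finset.univ.filter fun i => bt.1 i ≠ bt.2 i).card = k).card
    = ((gapSets p n).sigma fun T => T.powersetCard k).card := by
  refine Finset.card_bij'
    (fun (bt : (Fin n → Bool) × (Fin n → Bool)) _ =>
      (⟨onesF bt.2, diffF bt⟩ : Σ _ : Finset ℕ, Finset ℕ))
    (fun (TD : Σ _ : Finset ℕ, Finset ℕ) _ =>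
      (fun i => decide ((i : ℕ) ∈ TD.1 ∧ (i : ℕ) ∉ TD.2),
       fun i => decide ((i : ℕ) ∈ TD.1))) ?_ ?_ ?_ ?_
  · rintro bt hbt
    simp only [Finset.mem_filter, Finset.mem_univ, true_and] at hbt
    obtain ⟨h1, h2, h3, h4⟩ := hbt
    rw [Finset.mem_sigma]
    constructor
    · rw [mem_gapSets]
      refine ⟨fun x hx => mem_onesF_lt _ hx, fun a ha b hb hab => ?_⟩
      have han := mem_onesF_lt _ ha
      have hbn := mem_onesF_lt _ hb
      have ha' := (mem_onesF bt.2 ⟨a, han⟩).1 ha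
      have hb' := (mem_onesF bt.2 ⟨b, hbn⟩).1 hb
      exact h2 ⟨a, han⟩ ⟨b, hbn⟩ ha' hb' hab
    · rw [Finset.mem_powersetCard]
      constructor
      · intro x hx
        dsimp only at hx ⊢
        have hxn : x < n := by
          simp only [diffF, Finset.mem_image] at hx
          obtain ⟨j, -, rfl⟩ := hx
          exact j.isLt
        have hx' := (mem_diffF bt ⟨x, hxn⟩).1 hx
        rw [show x = ((⟨x, hxn⟩ : Fin n) : ℕ) from rfl, mem_onesF]
        cases ht : bt.2 ⟨x, hxn⟩
        · cases hb : bt.1 ⟨x, hxn⟩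
          · exact absurd (hb.trans ht.symm) hx'
          · exact absurd (h3 _ hb) (by simp [ht])
        · rfl
      · exact (Finset.card_image_of_injective _ Fin.val_injective).trans h4
  · rintro ⟨T, D⟩ hTD
    rw [Finset.mem_sigma, mem_gapSets, Finset.mem_powersetCard] at hTD
    obtain ⟨⟨hTn, hTgap⟩, hDT, hDk⟩ := hTD
    simp only [Finset.mem_filter, Finset.mem_univ, true_and]
    refine ⟨?_, ?_, ?_, ?_⟩
    · intro i j hi hj hij
      rw [decide_eq_true_eq] at hi hj
      exact hTgap _ hi.1 _ hj.1 hij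
    · intro i j hi hj hij
      rw [decide_eq_true_eq] at hi hj
      exact hTgap _ hi _ hj hij
    · intro i hi
      rw [decide_eq_true_eq] at hi ⊢
      exact hi.1
    · have : (Finset.univ.filter fun i : Fin n =>
          (decide ((i : ℕ) ∈ T ∧ (i : ℕ) ∉ D)) ≠ (decide ((i : ℕ) ∈ T)))
          = Finset.univ.filter fun i : Fin n => (i : ℕ) ∈ D := by
        apply Finset.filter_congr
        intro i _
        by_cases hiD : (i : ℕ) ∈ D
        · have hiT : (i : ℕ) ∈ T := hDT hiD
          simp [hiD, hiT]
        · by_cases hiT : (i : ℕ) ∈ T <;> simp [hiD, hiT]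
      rw [this, card_filter_val_mem D fun x hx => hTn x (hDT hx), hDk]
  · rintro bt hbt
    simp only [Finset.mem_filter, Finset.mem_univ, true_and] at hbt
    obtain ⟨h1, h2, h3, h4⟩ := hbt
    have key2 : ∀ i : Fin n, decide ((i : ℕ) ∈ onesF bt.2) = bt.2 i := by
      intro i
      cases ht : bt.2 i
      · simp [mem_onesF, ht]
      · simp [mem_onesF, ht]
    have key1 : ∀ i : Fin n,
        decide ((i : ℕ) ∈ onesF bt.2 ∧ (i : ℕ) ∉ diffF bt) = bt.1 i := by
      intro i
      have h5 := mem_onesF bt.2 i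
      have h6 := mem_diffF bt i
      have h7 := h3 i
      cases ht : bt.2 i <;> cases hb : bt.1 i <;> simp_all
    exact Prod.ext (funext key1) (funext key2)
  · rintro ⟨T, D⟩ hTD
    rw [Finset.mem_sigma, mem_gapSets, Finset.mem_powersetCard] at hTD
    obtain ⟨⟨hTn, hTgap⟩, hDT, hDk⟩ := hTD
    have hT : onesF (fun i : Fin n => decide ((i : ℕ) ∈ T)) = T := by
      ext x
      constructor
      · intro hx
        have hxn := mem_onesF_lt _ hx
        have := (mem_onesF _ ⟨x, hxn⟩).1 hx
        rwa [decide_eq_true_eq] at this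
      · intro hx
        have hxn := hTn x hx
        rw [show x = ((⟨x, hxn⟩ : Fin n) : ℕ) from rfl, mem_onesF, decide_eq_true_eq]
        exact hx
    have hD : diffF (fun i : Fin n => decide ((i : ℕ) ∈ T ∧ (i : ℕ) ∉ D),
        fun i : Fin n => decide ((i : ℕ) ∈ T)) = D := by
      ext x
      constructor
      · intro hx
        have hxn : x < n := by
          simp only [diffF, Finset.mem_image] at hx
          obtain ⟨j, -, rfl⟩ := hx
          exact j.isLt
        have hne := (mem_diffF _ ⟨x, hxn⟩).1 hx
        by_contra hxD
        by_cases hxT : x ∈ T <;> simp [hxT, hxD] at hne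
      · intro hx
        have hxn : x < n := hTn x (hDT hx)
        rw [show x = ((⟨x, hxn⟩ : Fin n) : ℕ) from rfl, mem_diffF]
        have hxT : x ∈ T := hDT hx
        simp [hxT, hx]
    exact Sigma.ext hT (heq_of_eq hD)

/-- `c_k(Γ^p_n) = Σ_{i=k}^{⌊(n+p)/(p+1)⌋} C(n - ip + p, i)·C(i, k)`. -/
theorem cubeCount_eq_sum (p n k : ℕ) (hp : 1 ≤ p) :
    cubeCount p n k =
      ∑ i ∈ Finset.Icc k ((n + p) / (p + 1)), (n + p - i * p).choose i * i.choose k := by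
  have h1 : cubeCount p n k
      = ((Finset.univ : Finset ((Fin n → Bool) × (Fin n → Bool))).filter
          fun bt : (Fin n → Bool) × (Fin n → Bool) =>
            IsFibStr p bt.1 ∧ IsFibStr p bt.2 ∧ (∀ i, bt.1 i = true → bt.2 i = true) ∧
              (Finset.univ.filter fun i => bt.1 i ≠ bt.2 i).card = k).card := by
    rw [cubeCount, Nat.card_eq_fintype_card, Fintype.card_subtype]
  rw [h1, pairs_card, Finset.card_sigma]
  have h2 : ∑ T ∈ gapSets p n, (T.powersetCard k).card
      = ∑ T ∈ gapSets p n, T.card.choose k :=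
    Finset.sum_congr rfl fun T _ => Finset.card_powersetCard k T
  rw [h2]
  have hmaps : ∀ T ∈ gapSets p n, T.card ∈ Finset.range (n + 1) := by
    intro T hT
    rw [Finset.mem_range, Nat.lt_succ_iff]
    have := (mem_gapSets.1 hT).1
    have hsub : T ⊆ Finset.range n := fun x hx => Finset.mem_range.2 (this x hx)
    simpa using Finset.card_le_card hsub
  rw [← Finset.sum_fiberwise_of_maps_to hmaps fun T => T.card.choose k]
  have h3 : ∀ j ∈ Finset.range (n + 1),
      ∑ T ∈ (gapSets p n).filter (fun T => T.card = j), T.card.choose k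
        = (n + p - j * p).choose j * j.choose k := by
    intro j _
    have : ∀ T ∈ (gapSets p n).filter (fun T => T.card = j),
        T.card.choose k = j.choose k := by
      intro T hT
      rw [(Finset.mem_filter.1 hT).2]
    rw [Finset.sum_congr rfl this, Finset.sum_const, smul_eq_mul]
    congr 1
    exact gap_count p n j
  rw [Finset.sum_congr rfl h3]
  have hbnd : (n + p) / (p + 1) ≤ n := by
    rw [Nat.lt_succ_iff.symm]
    rw [Nat.div_lt_iff_lt_mul (by omega)]
    nlinarith
  refine (Finset.sum_subset ?_ ?_).symm
  · intro i hi
    rw [Finset.mem_Icc] at hi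
    rw [Finset.mem_range, Nat.lt_succ_iff]
    omega
  · intro i hi hni
    rw [Finset.mem_Icc, not_and_or, not_le, not_le] at hni
    rcases hni with hik | hbi
    · rw [Nat.choose_eq_zero_of_lt hik, mul_zero]
    · have hlt : n + p < i * p + i := by
        have h := (Nat.div_lt_iff_lt_mul (show 0 < p + 1 by omega)).1 hbi
        calc n + p < i * (p + 1) := h
        _ = i * p + i := by ring
      have hi1 : 1 ≤ i := lt_of_le_of_lt (Nat.zero_le _) hbi
      have : n + p - i * p < i := by omega
      rw [Nat.choose_eq_zero_of_lt this, zero_mul]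
end

section
/- For every integer p ≥ 1, every integer n ≥ 1 and every index i with 1 ≤ i ≤ n, the number of edges of the Fibonacci p-cube Γ^p_n whose two endpoints differ exactly in coordinate i equals F^p_i · F^p_{n−i+1}. -/
noncomputable def numFib (p m : ℕ) : ℕ := Nat.card {u : Fin m → Bool // IsFibStr p u}

lemma numFib_zero (p : ℕ) : numFib p 0 = 1 := by
  rw [numFib, Nat.card_eq_fintype_card]
  apply Fintype.card_eq_one_iff.mpr
  refine ⟨⟨fun j => j.elim0, fun i => i.elim0⟩, ?_⟩
  intro y
  apply Subtype.ext
  funext j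
  exact j.elim0

def restrF (p m : ℕ) (u : Fin (m+1) → Bool) : Fin m → Bool := fun j => u j.castSucc
def restrT (p m : ℕ) (u : Fin (m+1) → Bool) : Fin (m-p) → Bool :=
  fun j => u ⟨j, by have := j.isLt; omega⟩
def extF (p m : ℕ) (u : Fin m → Bool) : Fin (m+1) → Bool :=
  fun j => if h : (j:ℕ) < m then u ⟨j, h⟩ else false
def extT (p m : ℕ) (u : Fin (m-p) → Bool) : Fin (m+1) → Bool :=
  fun j => if h : (j:ℕ) < m - p then u ⟨j, h⟩ else if (j:ℕ) = m then true else false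

lemma extF_eq_true_iff (p m : ℕ) (u : Fin m → Bool) (j : Fin (m+1)) :
    extF p m u j = true ↔ ∃ h : (j:ℕ) < m, u ⟨j, h⟩ = true := by
  unfold extF
  by_cases h : (j:ℕ) < m
  · simp [h]
  · simp [h]

lemma extT_eq_true_iff (p m : ℕ) (u : Fin (m-p) → Bool) (j : Fin (m+1)) :
    extT p m u j = true ↔ (∃ h : (j:ℕ) < m - p, u ⟨j, h⟩ = true) ∨ (j:ℕ) = m := by
  unfold extT
  by_cases h : (j:ℕ) < m - p
  · simp [h]; intro hm; omega
  · by_cases h2 : (j:ℕ) = m <;> simp [h, h2]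

lemma restrF_isFibStr {p m : ℕ} {u : Fin (m+1) → Bool} (hu : IsFibStr p u) :
    IsFibStr p (restrF p m u) := by
  intro a b ha hb hab
  exact hu a.castSucc b.castSucc ha hb (by simpa using hab)

lemma restrT_isFibStr {p m : ℕ} {u : Fin (m+1) → Bool} (hu : IsFibStr p u) :
    IsFibStr p (restrT p m u) := by
  intro a b ha hb hab
  exact hu ⟨a, by have := a.isLt; omega⟩ ⟨b, by have := b.isLt; omega⟩ ha hb hab

lemma extF_isFibStr {p m : ℕ} {u : Fin m → Bool} (hu : IsFibStr p u) :
    IsFibStr p (extF p m u) := by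
  intro a b ha hb hab
  rw [extF_eq_true_iff] at ha hb
  obtain ⟨h1, ha⟩ := ha
  obtain ⟨h2, hb⟩ := hb
  exact hu ⟨a, h1⟩ ⟨b, h2⟩ ha hb hab

lemma extT_isFibStr {p m : ℕ} {u : Fin (m-p) → Bool} (hu : IsFibStr p u) :
    IsFibStr p (extT p m u) := by
  intro a b ha hb hab
  rw [extT_eq_true_iff] at ha hb
  rcases ha with ⟨h1, ha⟩ | h1
  · rcases hb with ⟨h2, hb⟩ | h2
    · exact hu ⟨a, h1⟩ ⟨b, h2⟩ ha hb hab
    · omega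
  · rcases hb with ⟨h2, _⟩ | h2
    · have := b.isLt; omega
    · have := b.isLt; omega

def recEquiv (p m : ℕ) :
    {u : Fin (m+1) → Bool // IsFibStr p u} ≃
      ({u : Fin m → Bool // IsFibStr p u} ⊕ {u : Fin (m-p) → Bool // IsFibStr p u}) where
  toFun u :=
    if h : u.1 (Fin.last m) = true then
      Sum.inr ⟨restrT p m u.1, restrT_isFibStr u.2⟩
    else
      Sum.inl ⟨restrF p m u.1, restrF_isFibStr u.2⟩
  invFun s :=
    match s with
    | Sum.inl u => ⟨extF p m u.1, extF_isFibStr u.2⟩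
    | Sum.inr u => ⟨extT p m u.1, extT_isFibStr u.2⟩
  left_inv u := by
    dsimp only
    by_cases h : u.1 (Fin.last m) = true
    · rw [dif_pos h]
      apply Subtype.ext
      funext j
      show extT p m (restrT p m u.1) j = u.1 j
      unfold extT restrT
      by_cases h1 : (j:ℕ) < m - p
      · rw [dif_pos h1]
        all_goals exact congrArg _ (Fin.ext rfl)
      · rw [dif_neg h1]
        by_cases h2 : (j:ℕ) = m
        · rw [if_pos h2]
          have hj : j = Fin.last m := Fin.ext h2
          rw [hj, h]
        · rw [if_neg h2]
          rcases Bool.eq_false_or_eq_true (u.1 j) with hj | hj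
          · exfalso
            have := u.2 j (Fin.last m) hj h (by have := j.isLt; simp [Fin.lt_iff_val_lt_val, Fin.last]; omega)
            simp [Fin.last] at this
            omega
          · exact hj.symm
    · rw [dif_neg h]
      apply Subtype.ext
      funext j
      show extF p m (restrF p m u.1) j = u.1 j
      unfold extF restrF
      by_cases h1 : (j:ℕ) < m
      · rw [dif_pos h1]
        all_goals exact congrArg _ (Fin.ext rfl)
      · rw [dif_neg h1]
        have hj : j = Fin.last m := Fin.ext (by have := j.isLt; simp [Fin.last]; omega)
        rw [hj]
        exact ((Bool.not_eq_true _).mp h).symm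
  right_inv s := by
    match s with
    | Sum.inl u =>
      show (if h : extF p m u.1 (Fin.last m) = true then _ else _) = _
      rw [dif_neg (by unfold extF; rw [dif_neg (by simp [Fin.last])]; simp)]
      congr 1
      apply Subtype.ext
      funext j
      show extF p m u.1 j.castSucc = u.1 j
      unfold extF
      rw [dif_pos (by simpa using j.isLt)]
      all_goals exact congrArg _ (Fin.ext rfl)
    | Sum.inr u =>
      show (if h : extT p m u.1 (Fin.last m) = true then _ else _) = _
      rw [dif_pos (by unfold extT; rw [dif_neg (by simp [Fin.last])]; simp [Fin.last])]
      congr 1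
      apply Subtype.ext
      funext j
      show extT p m u.1 ⟨j, _⟩ = u.1 j
      unfold extT
      rw [dif_pos (by simpa using j.isLt)]
      all_goals exact congrArg _ (Fin.ext rfl)

lemma numFib_succ (p m : ℕ) : numFib p (m+1) = numFib p m + numFib p (m-p) := by
  rw [numFib, Nat.card_congr (recEquiv p m), Nat.card_sum]
  rfl

lemma fibP_zero (p : ℕ) : fibP p 0 = 0 := by rw [fibP]

lemma fibP_of_le (p k : ℕ) (h1 : 1 ≤ k) (h2 : k ≤ p) : fibP p k = 1 := by
  match k, h1 with
  | j+1, _ => rw [fibP, if_pos h2]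

lemma fibP_succ_p (p : ℕ) (hp : 1 ≤ p) : fibP p (p+1) = 1 := by
  rw [fibP, if_neg (by omega), fibP_of_le p p hp le_rfl]
  simp [fibP_zero]

lemma numFib_eq (p : ℕ) (hp : 1 ≤ p) : ∀ m, numFib p m = fibP p (m+p+1) := by
  intro m
  induction m using Nat.strong_induction_on with
  | _ m ih =>
    match m with
    | 0 => rw [numFib_zero, show 0+p+1 = p+1 by ring]; exact (fibP_succ_p p hp).symm
    | Nat.succ m =>
      rw [numFib_succ, ih m (by omega), ih (m-p) (by omega)]
      have hrec : fibP p (m+1+p+1) = fibP p (m+p+1) + fibP p (m+1) := by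
        rw [show m+1+p+1 = (m+p+1)+1 by ring, fibP, if_neg (by omega)]
        congr 1
        congr 1
        omega
      rw [hrec]
      congr 1
      by_cases hm : p ≤ m
      · congr 1
        omega
      · rw [show m-p+p+1 = p+1 by omega, fibP_succ_p p hp,
          fibP_of_le p (m+1) (by omega) (by omega)]

lemma isFibStr_mono {p n : ℕ} {u v : Fin n → Bool} (h : ∀ j, u j = true → v j = true)
    (hv : IsFibStr p v) : IsFibStr p u :=
  fun i j hi hj hij => hv i j (h i hi) (h j hj) hij

def buildV (p n i : ℕ) (a : Fin (i-1-p) → Bool) (b : Fin (n-i-p) → Bool) : Fin n → Bool :=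
  fun j => if h : (j:ℕ) < i-1-p then a ⟨j, h⟩
    else if (j:ℕ) = i-1 then true
    else if h : i+p ≤ (j:ℕ) then b ⟨(j:ℕ)-(i+p), by have := j.isLt; omega⟩
    else false

lemma buildV_eq_true_iff (p n i : ℕ) (hi1 : 1 ≤ i)
    (a : Fin (i-1-p) → Bool) (b : Fin (n-i-p) → Bool) (j : Fin n) :
    buildV p n i a b j = true ↔
      (∃ h : (j:ℕ) < i-1-p, a ⟨j, h⟩ = true) ∨ (j:ℕ) = i-1 ∨
      (∃ h : i+p ≤ (j:ℕ), b ⟨(j:ℕ)-(i+p), by have := j.isLt; omega⟩ = true) := by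
  unfold buildV
  by_cases h1 : (j:ℕ) < i-1-p
  · rw [dif_pos h1]
    constructor
    · intro h; exact Or.inl ⟨h1, h⟩
    · rintro (⟨_, h⟩ | h | ⟨h, _⟩)
      · exact h
      · omega
      · omega
  · rw [dif_neg h1]
    by_cases h2 : (j:ℕ) = i-1
    · simp [h2, if_pos]
    · rw [if_neg h2]
      by_cases h3 : i+p ≤ (j:ℕ)
      · rw [dif_pos h3]
        constructor
        · intro h; exact Or.inr (Or.inr ⟨h3, h⟩)
        · rintro (⟨h, _⟩ | h | ⟨h, hb⟩)
          · omega
          · omega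
          · exact hb
      · rw [dif_neg h3]
        constructor
        · intro h; exact absurd h (by simp)
        · rintro (⟨h, _⟩ | h | ⟨h, _⟩) <;> omega

lemma buildV_isFibStr {p n i : ℕ} (hp : 1 ≤ p) (hi1 : 1 ≤ i) (hi2 : i ≤ n)
    {a : Fin (i-1-p) → Bool} (ha : IsFibStr p a)
    {b : Fin (n-i-p) → Bool} (hb : IsFibStr p b) :
    IsFibStr p (buildV p n i a b) := by
  intro x y hx hy hxy
  rw [buildV_eq_true_iff p n i hi1] at hx hy
  rcases hx with ⟨h1, hx⟩ | h1 | ⟨h1, hx⟩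
  · rcases hy with ⟨h2, hy⟩ | h2 | ⟨h2, _⟩
    · exact ha ⟨x, h1⟩ ⟨y, h2⟩ hx hy hxy
    · omega
    · omega
  · rcases hy with ⟨h2, _⟩ | h2 | ⟨h2, _⟩
    · omega
    · omega
    · omega
  · rcases hy with ⟨h2, _⟩ | h2 | ⟨h2, hy⟩
    · omega
    · omega
    · have := hb ⟨(x:ℕ)-(i+p), by have := x.isLt; omega⟩ ⟨(y:ℕ)-(i+p), by have := y.isLt; omega⟩
        hx hy (by show (x:ℕ)-(i+p) < (y:ℕ)-(i+p); omega)
      have h3 : (x:ℕ)-(i+p) + p + 1 ≤ (y:ℕ)-(i+p) := this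
      omega

def edgeEquiv (p n i : ℕ) (hp : 1 ≤ p) (hn : 1 ≤ n) (hi1 : 1 ≤ i) (hi2 : i ≤ n) :
    {uv : (Fin n → Bool) × (Fin n → Bool) //
        IsFibStr p uv.1 ∧ IsFibStr p uv.2 ∧
        uv.1 ⟨i - 1, Nat.lt_of_lt_of_le (Nat.sub_lt hi1 Nat.one_pos) hi2⟩ = false ∧ uv.2 ⟨i - 1, Nat.lt_of_lt_of_le (Nat.sub_lt hi1 Nat.one_pos) hi2⟩ = true ∧
        ∀ j : Fin n, (j : ℕ) ≠ i - 1 → uv.1 j = uv.2 j} ≃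
      ({a : Fin (i-1-p) → Bool // IsFibStr p a} × {b : Fin (n-i-p) → Bool // IsFibStr p b}) where
  toFun uv :=
    (⟨fun j => uv.1.2 ⟨j, by have := j.isLt; omega⟩, by
        intro x y hx hy hxy
        exact uv.2.2.1 ⟨x, by have := x.isLt; omega⟩ ⟨y, by have := y.isLt; omega⟩ hx hy hxy⟩,
     ⟨fun j => uv.1.2 ⟨(j:ℕ)+(i+p), by have := j.isLt; omega⟩, by
        intro x y hx hy hxy
        have h2 : (x:ℕ)+(i+p)+p+1 ≤ (y:ℕ)+(i+p) :=
          uv.2.2.1 ⟨(x:ℕ)+(i+p), by have := x.isLt; omega⟩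
            ⟨(y:ℕ)+(i+p), by have := y.isLt; omega⟩ hx hy
            (by show (x:ℕ)+(i+p) < (y:ℕ)+(i+p); omega)
        omega⟩)
  invFun ab :=
    ⟨(Function.update (buildV p n i ab.1.1 ab.2.1) ⟨i-1, Nat.lt_of_lt_of_le (Nat.sub_lt hi1 Nat.one_pos) hi2⟩ false,
      buildV p n i ab.1.1 ab.2.1), by
      refine ⟨?_, buildV_isFibStr hp hi1 hi2 ab.1.2 ab.2.2, ?_, ?_, ?_⟩
      · apply isFibStr_mono ?_ (buildV_isFibStr hp hi1 hi2 ab.1.2 ab.2.2)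
        intro j hj
        have hj' : Function.update (buildV p n i ab.1.1 ab.2.1) ⟨i-1, Nat.lt_of_lt_of_le (Nat.sub_lt hi1 Nat.one_pos) hi2⟩ false j
            = true := hj
        by_cases h : j = (⟨i-1, Nat.lt_of_lt_of_le (Nat.sub_lt hi1 Nat.one_pos) hi2⟩ : Fin n)
        · rw [h, Function.update_self] at hj'; exact absurd hj' (by simp)
        · rwa [Function.update_of_ne h] at hj'
      · exact Function.update_self _ _ _
      · show buildV p n i ab.1.1 ab.2.1 ⟨i-1, Nat.lt_of_lt_of_le (Nat.sub_lt hi1 Nat.one_pos) hi2⟩ = true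
        unfold buildV
        rw [dif_neg (show ¬(i-1 < i-1-p) by omega)]
        simp
      · intro j hj
        exact Function.update_of_ne (fun h' => hj (congrArg Fin.val h')) _ _⟩
  left_inv uv := by
    obtain ⟨⟨u, v⟩, h1, h2, h3, h4, h5⟩ := uv
    have hv : buildV p n i (fun j => v ⟨j, by have := j.isLt; omega⟩)
        (fun j => v ⟨(j:ℕ)+(i+p), by have := j.isLt; omega⟩) = v := by
      funext j
      unfold buildV
      by_cases hj1 : (j:ℕ) < i-1-p
      · rw [dif_pos hj1]
        all_goals exact congrArg v (Fin.ext rfl)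
      · rw [dif_neg hj1]
        by_cases hj2 : (j:ℕ) = i-1
        · rw [if_pos hj2]
          have hK : j = (⟨i-1, Nat.lt_of_lt_of_le (Nat.sub_lt hi1 Nat.one_pos) hi2⟩ : Fin n) := Fin.ext hj2
          rw [hK]
          exact h4.symm
        · rw [if_neg hj2]
          by_cases hj3 : i+p ≤ (j:ℕ)
          · rw [dif_pos hj3]
            exact congrArg v (Fin.ext (by show (j:ℕ)-(i+p)+(i+p) = (j:ℕ); omega))
          · rw [dif_neg hj3]
            rcases Bool.eq_false_or_eq_true (v j) with hvj | hvj
            · exfalso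
              rcases Nat.lt_or_ge (j:ℕ) (i-1) with hlt | hge
              · have h6 : (j:ℕ)+p+1 ≤ i-1 := h2 j ⟨i-1, Nat.lt_of_lt_of_le (Nat.sub_lt hi1 Nat.one_pos) hi2⟩ hvj h4 hlt
                omega
              · have h6 : i-1+p+1 ≤ (j:ℕ) :=
                  h2 ⟨i-1, Nat.lt_of_lt_of_le (Nat.sub_lt hi1 Nat.one_pos) hi2⟩ j h4 hvj (by show i-1 < (j:ℕ); omega)
                omega
            · exact hvj.symm
    apply Subtype.ext
    refine Prod.ext ?_ ?_
    · show Function.update (buildV p n i _ _) ⟨i-1, Nat.lt_of_lt_of_le (Nat.sub_lt hi1 Nat.one_pos) hi2⟩ false = u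
      rw [show (buildV p n i (fun j => v ⟨j, by have := j.isLt; omega⟩)
        (fun j => v ⟨(j:ℕ)+(i+p), by have := j.isLt; omega⟩)) = v from hv]
      funext j
      by_cases h : j = (⟨i-1, Nat.lt_of_lt_of_le (Nat.sub_lt hi1 Nat.one_pos) hi2⟩ : Fin n)
      · rw [h, Function.update_self]
        exact h3.symm
      · rw [Function.update_of_ne h]
        exact (h5 j (fun hh => h (Fin.ext hh))).symm
    · exact hv
  right_inv ab := by
    obtain ⟨⟨a, ha⟩, ⟨b, hb⟩⟩ := ab
    refine Prod.ext (Subtype.ext ?_) (Subtype.ext ?_)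
    · funext j
      show buildV p n i a b ⟨(j:ℕ), _⟩ = a j
      unfold buildV
      rw [dif_pos (show ((j:ℕ) : ℕ) < i-1-p from by have := j.isLt; omega)]
      all_goals exact congrArg a (Fin.ext rfl)
    · funext j
      show buildV p n i a b ⟨(j:ℕ)+(i+p), _⟩ = b j
      unfold buildV
      rw [dif_neg (show ¬((j:ℕ)+(i+p) < i-1-p) by omega),
        if_neg (show ¬((j:ℕ)+(i+p) = i-1) by omega),
        dif_pos (show i+p ≤ (j:ℕ)+(i+p) by omega)]
      exact congrArg b (Fin.ext (by show (j:ℕ)+(i+p)-(i+p) = (j:ℕ); omega))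

/-- The number of edges of `Γ^p_n` using direction `i` (1-based) is
`F^p_i · F^p_{n-i+1}`. -/
theorem edges_direction (p n i : ℕ) (hp : 1 ≤ p) (hn : 1 ≤ n) (hi1 : 1 ≤ i) (hi2 : i ≤ n) :
    Nat.card {uv : (Fin n → Bool) × (Fin n → Bool) //
        IsFibStr p uv.1 ∧ IsFibStr p uv.2 ∧
        uv.1 ⟨i - 1, by omega⟩ = false ∧ uv.2 ⟨i - 1, by omega⟩ = true ∧
        ∀ j : Fin n, (j : ℕ) ≠ i - 1 → uv.1 j = uv.2 j} =
      fibP p i * fibP p (n - i + 1) := by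
  rw [Nat.card_congr (edgeEquiv p n i hp hn hi1 hi2), Nat.card_prod]
  have h1 : numFib p (i-1-p) = fibP p i := by
    rw [numFib_eq p hp]
    by_cases h : p + 1 ≤ i
    · congr 1
      omega
    · rw [show i-1-p+p+1 = p+1 by omega, fibP_succ_p p hp, fibP_of_le p i hi1 (by omega)]
  have h2 : numFib p (n-i-p) = fibP p (n-i+1) := by
    rw [numFib_eq p hp]
    by_cases h : i + p ≤ n
    · congr 1
      omega
    · rw [show n-i-p+p+1 = p+1 by omega, fibP_succ_p p hp,
        fibP_of_le p (n-i+1) (by omega) (by omega)]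
  rw [show Nat.card {a : Fin (i-1-p) → Bool // IsFibStr p a} = numFib p (i-1-p) from rfl,
      show Nat.card {b : Fin (n-i-p) → Bool // IsFibStr p b} = numFib p (n-i-p) from rfl,
      h1, h2]
end

section
/- For every integer p ≥ 1 and every integer k ≥ 1, the generating function of the sequence (c_k(Γ^p_n))_{n≥0} satisfies the formal power series identity (1 − x − x^{p+1})^{k+1} · Σ_{n≥0} c_k(Γ^p_n) x^n = x^{kp − p + k} in ℤ[[x]]. -/
def Sf (p n k : ℕ) : Finset ((Fin n → Bool) × (Fin n → Bool)) :=
  Finset.univ.filter fun bt =>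
    IsFibStr p bt.1 ∧ IsFibStr p bt.2 ∧ (∀ i, bt.1 i = true → bt.2 i = true) ∧
    (Finset.univ.filter fun i => bt.1 i ≠ bt.2 i).card = k

lemma cubeCount_eq (p n k : ℕ) : cubeCount p n k = (Sf p n k).card := by
  rw [cubeCount, Nat.card_eq_fintype_card, Fintype.card_subtype, Sf]

/-- Append `e` coordinates to `u`; the appended block is all `false` except possibly
the final coordinate, which is `b`. -/
def pad {q : ℕ} (e : ℕ) (b : Bool) (u : Fin q → Bool) : Fin (q + e) → Bool :=
  fun i => if h : (i : ℕ) < q then u ⟨i, h⟩ else (decide ((i : ℕ) = q + e - 1) && b)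

lemma pad_lt {q : ℕ} (e : ℕ) (b : Bool) (u : Fin q → Bool) (i : Fin (q+e)) (h : (i:ℕ) < q) :
    pad e b u i = u ⟨i, h⟩ := dif_pos h

lemma pad_castAdd {q : ℕ} (e : ℕ) (b : Bool) (u : Fin q → Bool) (i : Fin q) :
    pad e b u (Fin.castAdd e i) = u i := by
  rw [pad_lt e b u _ (by simp [i.isLt])]
  exact congrArg u (Fin.ext rfl)

lemma pad_ge {q : ℕ} (e : ℕ) (b : Bool) (u : Fin q → Bool) (i : Fin (q+e)) (h : q ≤ (i:ℕ)) :
    pad e b u i = (decide ((i : ℕ) = q + e - 1) && b) := dif_neg (by omega)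

lemma isFibStr_pad_false {p q e : ℕ} (u : Fin q → Bool) :
    IsFibStr p (pad e false u) ↔ IsFibStr p u := by
  constructor
  · intro H i j hi hj hij
    exact H (Fin.castAdd e i) (Fin.castAdd e j) (by rwa [pad_castAdd]) (by rwa [pad_castAdd]) hij
  · intro H i j hi hj hij
    by_cases h1 : (i:ℕ) < q
    · by_cases h2 : (j:ℕ) < q
      · exact H ⟨i, h1⟩ ⟨j, h2⟩ (by rwa [pad_lt e false u i h1] at hi)
          (by rwa [pad_lt e false u j h2] at hj) hij
      · rw [pad_ge e false u j (by omega)] at hj; simp at hj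
    · rw [pad_ge e false u i (by omega)] at hi; simp at hi

lemma isFibStr_pad_true {p q : ℕ} (u : Fin q → Bool) :
    IsFibStr p (pad (p+1) true u) ↔ IsFibStr p u := by
  constructor
  · intro H i j hi hj hij
    exact H (Fin.castAdd _ i) (Fin.castAdd _ j) (by rwa [pad_castAdd]) (by rwa [pad_castAdd]) hij
  · intro H i j hi hj hij
    by_cases h1 : (i:ℕ) < q
    · by_cases h2 : (j:ℕ) < q
      · exact H ⟨i, h1⟩ ⟨j, h2⟩ (by rwa [pad_lt _ true u i h1] at hi)
          (by rwa [pad_lt _ true u j h2] at hj) hij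
      · rw [pad_ge _ true u j (by omega)] at hj
        simp only [Bool.and_true, decide_eq_true_eq] at hj
        omega
    · rw [pad_ge _ true u i (by omega)] at hi
      simp only [Bool.and_true, decide_eq_true_eq] at hi
      have : (j:ℕ) < q + (p+1) := j.isLt
      omega

lemma diff_card_pad {q e : ℕ} (he : 1 ≤ e) (b1 b2 : Bool) (u v : Fin q → Bool) :
    (Finset.univ.filter fun i => pad e b1 u i ≠ pad e b2 v i).card
      = (Finset.univ.filter fun i => u i ≠ v i).card + (if b1 = b2 then 0 else 1) := by
  rw [Finset.card_filter, Finset.card_filter, Fin.sum_univ_add]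
  congr 1
  · apply Finset.sum_congr rfl
    intro i _
    rw [pad_castAdd, pad_castAdd]
  · have : ∀ j : Fin e, (if pad e b1 u (Fin.natAdd q j) ≠ pad e b2 v (Fin.natAdd q j) then 1 else 0)
        = if (j:ℕ) = e - 1 then (if b1 = b2 then 0 else 1) else 0 := by
      intro j
      rw [pad_ge e b1 u _ (by simp), pad_ge e b2 v _ (by simp)]
      have hco : ((Fin.natAdd q j : Fin (q+e)) : ℕ) = q + (j:ℕ) := rfl
      by_cases hj : (j:ℕ) = e - 1
      · have : ((Fin.natAdd q j : Fin (q+e)) : ℕ) = q + e - 1 := by omega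
        rw [this]
        simp only [decide_eq_true_eq, if_pos hj]
        cases b1 <;> cases b2 <;> simp
      · have : ¬ ((Fin.natAdd q j : Fin (q+e)) : ℕ) = q + e - 1 := by
          have := j.isLt; omega
        have h2 : ¬ (q + (j:ℕ) = q + e - 1) := by omega
        simp [this, h2, hj]
    rw [Finset.sum_congr rfl (fun j _ => this j)]
    have h3 : ∀ j : Fin e, ((j:ℕ) = e - 1) = (j = ⟨e-1, by omega⟩) := by
      intro j; simp [Fin.ext_iff]
    simp_rw [h3]
    rw [Finset.sum_ite_eq' Finset.univ]
    simp

def res {q e : ℕ} (u : Fin (q + e) → Bool) : Fin q → Bool := fun i => u (Fin.castAdd e i)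

lemma last_coe (q p : ℕ) : ((Fin.last (q+p) : Fin (q+(p+1))) : ℕ) = q + p := rfl

lemma res_pad {q e : ℕ} (b : Bool) (u : Fin q → Bool) : res (pad e b u) = u := by
  funext i; exact pad_castAdd e b u i

lemma eq_pad {q e : ℕ} (u : Fin (q+e) → Bool) (b : Bool)
    (h : ∀ i : Fin (q+e), q ≤ (i:ℕ) → u i = (decide ((i:ℕ) = q + e - 1) && b)) :
    u = pad e b (res u) := by
  funext i
  by_cases hi : (i:ℕ) < q
  · rw [pad_lt e b _ i hi]
    exact congrArg u (Fin.ext rfl).symm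
  · rw [pad_ge e b _ i (by omega), h i (by omega)]

lemma isFibStr_res {p q e : ℕ} (u : Fin (q+e) → Bool) (h : IsFibStr p u) :
    IsFibStr p (res u) := fun i j hi hj hij =>
  h (Fin.castAdd e i) (Fin.castAdd e j) hi hj hij

lemma pad_mono {q e : ℕ} {b1 b2 : Bool} {u v : Fin q → Bool} (hb : b1 = true → b2 = true)
    (huv : ∀ i, u i = true → v i = true) :
    ∀ i, pad e b1 u i = true → pad e b2 v i = true := by
  intro i hi
  by_cases h : (i:ℕ) < q
  · rw [pad_lt e b2 v i h]
    rw [pad_lt e b1 u i h] at hi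
    exact huv _ hi
  · rw [pad_ge e b2 v i (by omega)]
    rw [pad_ge e b1 u i (by omega)] at hi
    simp only [Bool.and_eq_true, decide_eq_true_eq] at hi ⊢
    exact ⟨hi.1, hb hi.2⟩

lemma top_forced {p q : ℕ} {t : Fin (q+(p+1)) → Bool} (hFib : IsFibStr p t)
    (hlast : t (Fin.last (q+p)) = true) :
    ∀ i : Fin (q+(p+1)), q ≤ (i:ℕ) → t i = (decide ((i:ℕ) = q + (p+1) - 1) && true) := by
  intro i hq
  by_cases h : (i:ℕ) = q + p
  · have hi : i = Fin.last (q+p) := Fin.ext (by rw [last_coe]; exact h)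
    rw [hi, hlast]
    have : ((Fin.last (q+p) : Fin (q+(p+1))) : ℕ) = q + (p+1) - 1 := by rw [last_coe]; omega
    rw [this]
    simp
  · have hne : ¬ ((i:ℕ) = q + (p+1) - 1) := by omega
    rw [decide_eq_false hne, Bool.false_and]
    cases hti : t i
    · rfl
    · exfalso
      have hlt : (i:ℕ) < ((Fin.last (q+p) : Fin (q+(p+1))) : ℕ) := by
        rw [last_coe]; have := i.isLt; omega
      have := hFib i (Fin.last (q+p)) hti hlast hlt
      rw [last_coe] at this
      omega

def Pcond (p : ℕ) {n : ℕ} (k : ℕ) (bt : (Fin n → Bool) × (Fin n → Bool)) : Prop :=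
  IsFibStr p bt.1 ∧ IsFibStr p bt.2 ∧ (∀ i, bt.1 i = true → bt.2 i = true) ∧
    (Finset.univ.filter fun i => bt.1 i ≠ bt.2 i).card = k

lemma mem_Sf {p n k : ℕ} {bt : (Fin n → Bool) × (Fin n → Bool)} :
    bt ∈ Sf p n k ↔ Pcond p k bt := by
  simp [Sf, Pcond]

lemma bot_forced {p q : ℕ} {bt : (Fin (q+(p+1)) → Bool) × (Fin (q+(p+1)) → Bool)} {b1 : Bool}
    (h2 : IsFibStr p bt.2) (h3 : ∀ i, bt.1 i = true → bt.2 i = true)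
    (h5 : bt.2 (Fin.last (q+p)) = true) (h6 : bt.1 (Fin.last (q+p)) = b1) :
    ∀ i : Fin (q+(p+1)), q ≤ (i:ℕ) → bt.1 i = (decide ((i:ℕ) = q + (p+1) - 1) && b1) := by
  intro i hq
  by_cases h : (i:ℕ) = q + (p+1) - 1
  · have hi : i = Fin.last (q+p) := Fin.ext (by rw [last_coe]; omega)
    have he : q + p = q + (p+1) - 1 := by omega
    rw [hi, h6, last_coe, decide_eq_true he, Bool.true_and]
  · rw [decide_eq_false h, Bool.false_and]
    cases hbi : bt.1 i
    · rfl
    · exfalso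
      have := h3 i hbi
      rw [top_forced h2 h5 i hq, decide_eq_false h] at this
      simp at this

lemma cardBC (p q k : ℕ) (b1 : Bool) :
    ((Sf p (q+(p+1)) (k + (if b1 then 0 else 1))).filter
      (fun bt => bt.2 (Fin.last (q+p)) = true ∧ bt.1 (Fin.last (q+p)) = b1)).card
    = (Sf p q k).card := by
  symm
  refine Finset.card_bij' (fun bt _ => (pad (p+1) b1 bt.1, pad (p+1) true bt.2))
    (fun bt _ => (res bt.1, res bt.2)) ?hi ?hj ?left ?right
  case hi =>
    intro bt ha
    rw [mem_Sf] at ha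
    obtain ⟨h1, h2, h3, h4⟩ := ha
    rw [Finset.mem_filter, mem_Sf]
    refine ⟨⟨?_, ?_, ?_, ?_⟩, ?_, ?_⟩
    · show IsFibStr p (pad (p+1) b1 bt.1)
      cases b1
      · exact (isFibStr_pad_false bt.1).mpr h1
      · exact (isFibStr_pad_true bt.1).mpr h1
    · exact (isFibStr_pad_true bt.2).mpr h2
    · exact pad_mono (fun _ => rfl) h3
    · show (Finset.univ.filter fun i => pad (p+1) b1 bt.1 i ≠ pad (p+1) true bt.2 i).card = _
      rw [diff_card_pad (by omega) b1 true bt.1 bt.2, h4]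
    · show pad (p+1) true bt.2 (Fin.last (q+p)) = true
      rw [pad_ge _ true bt.2 _ (by rw [last_coe]; omega)]
      have : ((Fin.last (q+p) : Fin (q+(p+1))) : ℕ) = q + (p+1) - 1 := by rw [last_coe]; omega
      rw [this]
      simp
    · show pad (p+1) b1 bt.1 (Fin.last (q+p)) = b1
      rw [pad_ge _ b1 bt.1 _ (by rw [last_coe]; omega)]
      have : ((Fin.last (q+p) : Fin (q+(p+1))) : ℕ) = q + (p+1) - 1 := by rw [last_coe]; omega
      rw [this]
      simp
  case hj =>
    intro bt ha
    rw [Finset.mem_filter, mem_Sf] at ha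
    obtain ⟨⟨h1, h2, h3, h4⟩, h5, h6⟩ := ha
    have htf := top_forced h2 h5
    have hbf := bot_forced h2 h3 h5 h6
    rw [mem_Sf]
    refine ⟨isFibStr_res bt.1 h1, isFibStr_res bt.2 h2, fun i hi => h3 _ hi, ?_⟩
    show (Finset.univ.filter fun i => res bt.1 i ≠ res bt.2 i).card = k
    have h4' := h4
    rw [show bt.1 = pad (p+1) b1 (res bt.1) from eq_pad bt.1 b1 hbf,
        show bt.2 = pad (p+1) true (res bt.2) from eq_pad bt.2 true htf] at h4'
    rw [diff_card_pad (by omega) b1 true (res bt.1) (res bt.2)] at h4'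
    cases b1 <;> simp at h4' ⊢ <;> omega
  case left =>
    intro bt ha
    show (res (pad (p+1) b1 bt.1), res (pad (p+1) true bt.2)) = bt
    rw [res_pad, res_pad]
  case right =>
    intro bt ha
    rw [Finset.mem_filter, mem_Sf] at ha
    obtain ⟨⟨h1, h2, h3, h4⟩, h5, h6⟩ := ha
    have htf := top_forced h2 h5
    have hbf := bot_forced h2 h3 h5 h6
    show (pad (p+1) b1 (res bt.1), pad (p+1) true (res bt.2)) = bt
    rw [← eq_pad bt.1 b1 hbf, ← eq_pad bt.2 true htf]

lemma cardA (p q k : ℕ) :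
    ((Sf p (q+1) k).filter (fun bt => bt.2 (Fin.last q) = false)).card = (Sf p q k).card := by
  symm
  refine Finset.card_bij' (fun bt _ => (pad 1 false bt.1, pad 1 false bt.2))
    (fun bt _ => (res bt.1, res bt.2)) ?hi ?hj ?left ?right
  case hi =>
    intro bt ha
    rw [mem_Sf] at ha
    obtain ⟨h1, h2, h3, h4⟩ := ha
    rw [Finset.mem_filter, mem_Sf]
    refine ⟨⟨?_, ?_, ?_, ?_⟩, ?_⟩
    · exact (isFibStr_pad_false bt.1).mpr h1
    · exact (isFibStr_pad_false bt.2).mpr h2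
    · exact pad_mono (fun h => h) h3
    · show (Finset.univ.filter fun i => pad 1 false bt.1 i ≠ pad 1 false bt.2 i).card = _
      rw [diff_card_pad (by omega) false false bt.1 bt.2, h4]
      simp
    · show pad 1 false bt.2 (Fin.last q) = false
      rw [pad_ge _ false bt.2 _ (by exact le_refl q)]
      simp
  case hj =>
    intro bt ha
    rw [Finset.mem_filter, mem_Sf] at ha
    obtain ⟨⟨h1, h2, h3, h4⟩, h5⟩ := ha
    have htf : ∀ i : Fin (q+1), q ≤ (i:ℕ) → bt.2 i = (decide ((i:ℕ) = q + 1 - 1) && false) := by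
      intro i hq
      have : i = Fin.last q := Fin.ext (by have := i.isLt; simp [Fin.last]; omega)
      rw [this, h5]
      simp
    have hbf : ∀ i : Fin (q+1), q ≤ (i:ℕ) → bt.1 i = (decide ((i:ℕ) = q + 1 - 1) && false) := by
      intro i hq
      simp only [Bool.and_false]
      cases hbi : bt.1 i
      · rfl
      · have := h3 i hbi
        rw [htf i hq] at this
        simp at this
    rw [mem_Sf]
    refine ⟨isFibStr_res bt.1 h1, isFibStr_res bt.2 h2, fun i hi => h3 _ hi, ?_⟩
    show (Finset.univ.filter fun i => res bt.1 i ≠ res bt.2 i).card = k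
    have h4' := h4
    rw [show bt.1 = pad 1 false (res bt.1) from eq_pad bt.1 false hbf,
        show bt.2 = pad 1 false (res bt.2) from eq_pad bt.2 false htf] at h4'
    rw [diff_card_pad (by omega) false false (res bt.1) (res bt.2)] at h4'
    simp at h4'
    exact h4'
  case left =>
    intro bt ha
    show (res (pad 1 false bt.1), res (pad 1 false bt.2)) = bt
    rw [res_pad, res_pad]
  case right =>
    intro bt ha
    rw [Finset.mem_filter, mem_Sf] at ha
    obtain ⟨⟨h1, h2, h3, h4⟩, h5⟩ := ha
    have htf : ∀ i : Fin (q+1), q ≤ (i:ℕ) → bt.2 i = (decide ((i:ℕ) = q + 1 - 1) && false) := by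
      intro i hq
      have : i = Fin.last q := Fin.ext (by have := i.isLt; simp [Fin.last]; omega)
      rw [this, h5]
      simp
    have hbf : ∀ i : Fin (q+1), q ≤ (i:ℕ) → bt.1 i = (decide ((i:ℕ) = q + 1 - 1) && false) := by
      intro i hq
      simp only [Bool.and_false]
      cases hbi : bt.1 i
      · rfl
      · have := h3 i hbi
        rw [htf i hq] at this
        simp at this
    show (pad 1 false (res bt.1), pad 1 false (res bt.2)) = bt
    rw [← eq_pad bt.1 false hbf, ← eq_pad bt.2 false htf]

lemma cardC0 (p q : ℕ) :
    ((Sf p (q+(p+1)) 0).filter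
      (fun bt => bt.2 (Fin.last (q+p)) = true ∧ bt.1 (Fin.last (q+p)) = false)).card = 0 := by
  rw [Finset.card_eq_zero, Finset.eq_empty_iff_forall_notMem]
  intro bt hbt
  rw [Finset.mem_filter, mem_Sf] at hbt
  obtain ⟨⟨h1, h2, h3, h4⟩, h5, h6⟩ := hbt
  rw [Finset.card_eq_zero, Finset.eq_empty_iff_forall_notMem] at h4
  apply h4 (Fin.last (q+p))
  rw [Finset.mem_filter]
  refine ⟨Finset.mem_univ _, ?_⟩
  rw [h5, h6]
  simp

/-- the string with a single `1` in the last position -/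
def eStr (n : ℕ) : Fin (n+1) → Bool := fun i => decide (i = Fin.last n)

lemma small_top {p n : ℕ} (hn : n + 1 ≤ p) {t : Fin (n+1) → Bool} (h : IsFibStr p t)
    (hl : t (Fin.last n) = true) : t = eStr n := by
  funext i
  by_cases hi : i = Fin.last n
  · rw [hi, hl, eStr]
    simp
  · have hlt : (i:ℕ) < n := by
      have h1 := i.isLt
      have h2 : (i:ℕ) ≠ n := fun hc => hi (Fin.ext (by simp [Fin.last, hc]))
      omega
    rw [eStr, decide_eq_false hi]
    cases hti : t i
    · rfl
    · have := h i (Fin.last n) hti hl (by simp [Fin.lt_def, Fin.last]; omega)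
      simp [Fin.last] at this
      omega

lemma isFibStr_eStr (p n : ℕ) : IsFibStr p (eStr n) := by
  intro i j hi hj hij
  rw [eStr, decide_eq_true_eq] at hi hj
  exfalso
  rw [hi, hj] at hij
  exact lt_irrefl _ hij

lemma cardBsmall (p n k : ℕ) (hn : n + 1 ≤ p) :
    ((Sf p (n+1) k).filter
      (fun bt => bt.2 (Fin.last n) = true ∧ bt.1 (Fin.last n) = true)).card
    = if k = 0 then 1 else 0 := by
  have key : ∀ bt ∈ (Sf p (n+1) k).filter
      (fun bt => bt.2 (Fin.last n) = true ∧ bt.1 (Fin.last n) = true),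
      bt = (eStr n, eStr n) ∧ k = 0 := by
    intro bt hbt
    rw [Finset.mem_filter, mem_Sf] at hbt
    obtain ⟨⟨h1, h2, h3, h4⟩, h5, h6⟩ := hbt
    have ht : bt.2 = eStr n := small_top hn h2 h5
    have hb : bt.1 = eStr n := small_top hn h1 h6
    have hd : (Finset.univ.filter fun i => bt.1 i ≠ bt.2 i) = ∅ := by
      rw [Finset.eq_empty_iff_forall_notMem]
      intro i hi
      rw [Finset.mem_filter, hb, ht] at hi
      exact hi.2 rfl
    rw [hd] at h4
    simp at h4
    exact ⟨Prod.ext hb ht, h4.symm⟩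
  by_cases hk : k = 0
  · subst hk
    rw [if_pos rfl]
    rw [Finset.card_eq_one]
    refine ⟨(eStr n, eStr n), ?_⟩
    rw [Finset.eq_singleton_iff_unique_mem]
    constructor
    · rw [Finset.mem_filter, mem_Sf]
      refine ⟨⟨isFibStr_eStr p n, isFibStr_eStr p n, fun i hi => hi, ?_⟩, ?_, ?_⟩
      · rw [Finset.card_eq_zero, Finset.eq_empty_iff_forall_notMem]
        intro i hi
        rw [Finset.mem_filter] at hi
        exact hi.2 rfl
      · simp [eStr]
      · simp [eStr]
    · intro bt hbt
      exact (key bt hbt).1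
  · rw [if_neg hk, Finset.card_eq_zero, Finset.eq_empty_iff_forall_notMem]
    intro bt hbt
    exact hk (key bt hbt).2

lemma cardCsmall (p n k : ℕ) (hn : n + 1 ≤ p) :
    ((Sf p (n+1) k).filter
      (fun bt => bt.2 (Fin.last n) = true ∧ bt.1 (Fin.last n) = false)).card
    = if k = 1 then 1 else 0 := by
  have key : ∀ bt ∈ (Sf p (n+1) k).filter
      (fun bt => bt.2 (Fin.last n) = true ∧ bt.1 (Fin.last n) = false),
      bt = ((fun _ => false), eStr n) ∧ k = 1 := by
    intro bt hbt
    rw [Finset.mem_filter, mem_Sf] at hbt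
    obtain ⟨⟨h1, h2, h3, h4⟩, h5, h6⟩ := hbt
    have ht : bt.2 = eStr n := small_top hn h2 h5
    have hb : bt.1 = fun _ => false := by
      funext i
      cases hbi : bt.1 i
      · rfl
      · exfalso
        have h7 := h3 i hbi
        rw [ht, eStr, decide_eq_true_eq] at h7
        rw [h7] at hbi
        rw [hbi] at h6
        simp at h6
    have hd : (Finset.univ.filter fun i => bt.1 i ≠ bt.2 i) = {Fin.last n} := by
      rw [hb, ht]
      ext i
      rw [Finset.mem_filter, Finset.mem_singleton, eStr]
      constructor
      · rintro ⟨-, hi⟩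
        by_contra hc
        rw [decide_eq_false hc] at hi
        exact hi rfl
      · intro hi
        refine ⟨Finset.mem_univ _, ?_⟩
        rw [decide_eq_true hi]
        simp
    rw [hd] at h4
    simp at h4
    exact ⟨Prod.ext hb ht, h4.symm⟩
  by_cases hk : k = 1
  · subst hk
    rw [if_pos rfl, Finset.card_eq_one]
    refine ⟨((fun _ => false), eStr n), ?_⟩
    rw [Finset.eq_singleton_iff_unique_mem]
    constructor
    · rw [Finset.mem_filter, mem_Sf]
      refine ⟨⟨?_, isFibStr_eStr p n, fun i hi => by simp at hi, ?_⟩, ?_, ?_⟩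
      · intro i j hi hj hij
        simp at hi
      · have : (Finset.univ.filter fun i => (fun _ => false) i ≠ eStr n i) = {Fin.last n} := by
          ext i
          rw [Finset.mem_filter, Finset.mem_singleton, eStr]
          constructor
          · rintro ⟨-, hi⟩
            by_contra hc
            rw [decide_eq_false hc] at hi
            exact hi rfl
          · intro hi
            refine ⟨Finset.mem_univ _, ?_⟩
            rw [decide_eq_true hi]
            simp
        rw [this]
        simp
      · simp [eStr]
      · rfl
    · intro bt hbt
      exact (key bt hbt).1
  · rw [if_neg hk, Finset.card_eq_zero, Finset.eq_empty_iff_forall_notMem]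
    intro bt hbt
    exact hk (key bt hbt).2

lemma card_zero_len (p k : ℕ) : (Sf p 0 k).card = if k = 0 then 1 else 0 := by
  by_cases hk : k = 0
  · subst hk
    rw [if_pos rfl, Finset.card_eq_one]
    refine ⟨((fun i => i.elim0), (fun i => i.elim0)), ?_⟩
    rw [Finset.eq_singleton_iff_unique_mem]
    constructor
    · rw [mem_Sf]
      refine ⟨fun i => i.elim0, fun i => i.elim0, fun i => i.elim0, ?_⟩
      simp
    · intro bt hbt
      ext i <;> exact i.elim0
  · rw [if_neg hk, Finset.card_eq_zero, Finset.eq_empty_iff_forall_notMem]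
    intro bt hbt
    rw [mem_Sf] at hbt
    obtain ⟨-, -, -, h4⟩ := hbt
    apply hk
    have : (Finset.univ.filter fun i => bt.1 i ≠ bt.2 i) = (∅ : Finset (Fin 0)) := by
      rw [Finset.eq_empty_iff_forall_notMem]
      intro i
      exact i.elim0
    rw [this] at h4
    simpa using h4.symm

lemma Sf_split (p m K : ℕ) :
    (Sf p (m+1) K).card
      = ((Sf p (m+1) K).filter (fun bt => bt.2 (Fin.last m) = false)).card
      + ((Sf p (m+1) K).filter (fun bt => bt.2 (Fin.last m) = true ∧ bt.1 (Fin.last m) = true)).card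
      + ((Sf p (m+1) K).filter (fun bt => bt.2 (Fin.last m) = true ∧ bt.1 (Fin.last m) = false)).card := by
  classical
  have h1 := Finset.card_filter_add_card_filter_not
    (s := Sf p (m+1) K) (p := fun bt => bt.2 (Fin.last m) = false)
  have e1 : (Sf p (m+1) K).filter (fun bt => ¬ bt.2 (Fin.last m) = false)
      = (Sf p (m+1) K).filter (fun bt => bt.2 (Fin.last m) = true) := by
    apply Finset.filter_congr
    intro bt _
    simp
  have h2 := Finset.card_filter_add_card_filter_not
    (s := (Sf p (m+1) K).filter (fun bt => bt.2 (Fin.last m) = true))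
    (p := fun bt => bt.1 (Fin.last m) = true)
  have e2 : ((Sf p (m+1) K).filter (fun bt => bt.2 (Fin.last m) = true)).filter
        (fun bt => bt.1 (Fin.last m) = true)
      = (Sf p (m+1) K).filter (fun bt => bt.2 (Fin.last m) = true ∧ bt.1 (Fin.last m) = true) := by
    rw [Finset.filter_filter]
  have e3 : ((Sf p (m+1) K).filter (fun bt => bt.2 (Fin.last m) = true)).filter
        (fun bt => ¬ bt.1 (Fin.last m) = true)
      = (Sf p (m+1) K).filter (fun bt => bt.2 (Fin.last m) = true ∧ bt.1 (Fin.last m) = false) := by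
    rw [Finset.filter_filter]
    apply Finset.filter_congr
    intro bt _
    simp
  rw [e1] at h1
  rw [e2, e3] at h2
  omega

lemma R0 (p k : ℕ) : cubeCount p 0 k = if k = 0 then 1 else 0 := by
  rw [cubeCount_eq]; exact card_zero_len p k

lemma Rsmall (p n k : ℕ) (hn : n + 1 ≤ p) :
    cubeCount p (n+1) k
      = cubeCount p n k + (if k = 0 then 1 else 0) + (if k = 1 then 1 else 0) := by
  rw [cubeCount_eq, cubeCount_eq, Sf_split, cardA, cardBsmall p n k hn, cardCsmall p n k hn]

lemma Rbig0 (p q : ℕ) :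
    cubeCount p (q+(p+1)) 0 = cubeCount p (q+p) 0 + cubeCount p q 0 := by
  have h := Sf_split p (q+p) 0
  rw [cardA] at h
  have hB : ((Sf p (q+p+1) 0).filter
      (fun bt => bt.2 (Fin.last (q+p)) = true ∧ bt.1 (Fin.last (q+p)) = true)).card
      = (Sf p q 0).card := by
    have h2 := cardBC p q 0 true
    norm_num at h2
    exact h2
  have hC : ((Sf p (q+p+1) 0).filter
      (fun bt => bt.2 (Fin.last (q+p)) = true ∧ bt.1 (Fin.last (q+p)) = false)).card = 0 := by
    exact cardC0 p q
  have k1 : cubeCount p (q+(p+1)) 0 = (Sf p (q+p+1) 0).card := cubeCount_eq p (q+(p+1)) 0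
  have k2 : cubeCount p (q+p) 0 = (Sf p (q+p) 0).card := cubeCount_eq p (q+p) 0
  have k3 : cubeCount p q 0 = (Sf p q 0).card := cubeCount_eq p q 0
  omega

lemma Rbig (p q k : ℕ) :
    cubeCount p (q+(p+1)) (k+1)
      = cubeCount p (q+p) (k+1) + cubeCount p q (k+1) + cubeCount p q k := by
  have h := Sf_split p (q+p) (k+1)
  rw [cardA] at h
  have hB : ((Sf p (q+p+1) (k+1)).filter
      (fun bt => bt.2 (Fin.last (q+p)) = true ∧ bt.1 (Fin.last (q+p)) = true)).card
      = (Sf p q (k+1)).card := by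
    have h2 := cardBC p q (k+1) true
    norm_num at h2
    exact h2
  have hC : ((Sf p (q+p+1) (k+1)).filter
      (fun bt => bt.2 (Fin.last (q+p)) = true ∧ bt.1 (Fin.last (q+p)) = false)).card
      = (Sf p q k).card := by
    have h2 := cardBC p q k false
    norm_num at h2
    exact h2
  have k1 : cubeCount p (q+(p+1)) (k+1) = (Sf p (q+p+1) (k+1)).card :=
    cubeCount_eq p (q+(p+1)) (k+1)
  have k2 : cubeCount p (q+p) (k+1) = (Sf p (q+p) (k+1)).card := cubeCount_eq p (q+p) (k+1)
  have k3 : cubeCount p q (k+1) = (Sf p q (k+1)).card := cubeCount_eq p q (k+1)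
  have k4 : cubeCount p q k = (Sf p q k).card := cubeCount_eq p q k
  omega

noncomputable def Cser (p k : ℕ) : PowerSeries ℤ := PowerSeries.mk fun n => (cubeCount p n k : ℤ)

noncomputable def Dser (p : ℕ) : PowerSeries ℤ :=
  1 - PowerSeries.X - PowerSeries.X ^ (p+1)

lemma coeff_D_mul (p : ℕ) (f : PowerSeries ℤ) (n : ℕ) :
    PowerSeries.coeff n (Dser p * f)
      = PowerSeries.coeff n f
        - (if 1 ≤ n then PowerSeries.coeff (n-1) f else 0)
        - (if p+1 ≤ n then PowerSeries.coeff (n-(p+1)) f else 0) := by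
  rw [Dser, sub_mul, sub_mul, one_mul, map_sub, map_sub]
  rw [show (PowerSeries.X : PowerSeries ℤ) * f = PowerSeries.X^1 * f by rw [pow_one]]
  rw [PowerSeries.coeff_X_pow_mul', PowerSeries.coeff_X_pow_mul']

lemma coeff_S (p n : ℕ) :
    PowerSeries.coeff n (∑ i ∈ Finset.range (p+1), (PowerSeries.X : PowerSeries ℤ)^i)
      = if n ≤ p then 1 else 0 := by
  rw [map_sum]
  simp only [PowerSeries.coeff_X_pow]
  rw [Finset.sum_ite_eq (Finset.range (p+1)) n (fun _ => (1:ℤ))]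
  simp [Finset.mem_range, Nat.lt_succ_iff]

lemma PS0 (p : ℕ) :
    Dser p * Cser p 0 = ∑ i ∈ Finset.range (p+1), (PowerSeries.X : PowerSeries ℤ)^i := by
  apply PowerSeries.ext; intro n
  rw [coeff_D_mul, coeff_S]
  simp only [Cser, PowerSeries.coeff_mk]
  by_cases h0 : n = 0
  · subst h0; simp [R0]
  by_cases hp1 : n ≤ p
  · obtain ⟨m, rfl⟩ : ∃ m, n = m+1 := ⟨n-1, by omega⟩
    rw [Rsmall p m 0 (by omega)]
    rw [if_pos (by omega : 1 ≤ m+1), if_neg (by omega : ¬ (p+1 ≤ m+1)), if_pos hp1]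
    simp only [if_pos rfl, if_neg (by omega : ¬ (0:ℕ) = 1)]
    push_cast
    ring
  · obtain ⟨q, rfl⟩ : ∃ q, n = q+(p+1) := ⟨n-(p+1), by omega⟩
    rw [Rbig0 p q]
    rw [if_pos (by omega : 1 ≤ q+(p+1)), if_pos (by omega : p+1 ≤ q+(p+1)),
      show q+(p+1)-1 = q+p by omega, show q+(p+1)-(p+1) = q by omega,
      if_neg (by omega : ¬ q+(p+1) ≤ p)]
    push_cast
    ring

lemma PS1 (p : ℕ) :
    Dser p * Cser p 1
      = PowerSeries.X^(p+1) * Cser p 0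
        + (∑ i ∈ Finset.range (p+1), (PowerSeries.X : PowerSeries ℤ)^i) - 1 := by
  apply PowerSeries.ext; intro n
  rw [coeff_D_mul, map_sub, map_add, coeff_S, PowerSeries.coeff_X_pow_mul',
    PowerSeries.coeff_one]
  simp only [Cser, PowerSeries.coeff_mk]
  by_cases h0 : n = 0
  · subst h0
    simp [R0]
  by_cases hp1 : n ≤ p
  · obtain ⟨m, rfl⟩ : ∃ m, n = m+1 := ⟨n-1, by omega⟩
    rw [Rsmall p m 1 (by omega)]
    rw [if_pos (by omega : 1 ≤ m+1), if_neg (by omega : ¬ (p+1 ≤ m+1)), if_pos hp1,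
      if_neg (by omega : ¬ m+1 = 0), if_neg (by omega : ¬ (p+1 ≤ m+1))]
    simp only [if_neg (by omega : ¬ (1:ℕ) = 0), if_pos rfl]
    push_cast
    ring
  · obtain ⟨q, rfl⟩ : ∃ q, n = q+(p+1) := ⟨n-(p+1), by omega⟩
    rw [Rbig p q 0]
    have e1 : q+(p+1)-1 = q+p := by omega
    have e2 : q+(p+1)-(p+1) = q := by omega
    simp only [if_pos (show 1 ≤ q+(p+1) by omega), if_pos (show p+1 ≤ q+(p+1) by omega),
      e1, e2, if_neg (show ¬ q+(p+1) ≤ p by omega), if_neg h0]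
    push_cast
    ring

lemma PSk (p j : ℕ) :
    Dser p * Cser p (j+2) = PowerSeries.X^(p+1) * Cser p (j+1) := by
  apply PowerSeries.ext; intro n
  rw [coeff_D_mul, PowerSeries.coeff_X_pow_mul']
  simp only [Cser, PowerSeries.coeff_mk]
  by_cases h0 : n = 0
  · subst h0
    simp [R0]
  by_cases hp1 : n ≤ p
  · obtain ⟨m, rfl⟩ : ∃ m, n = m+1 := ⟨n-1, by omega⟩
    rw [Rsmall p m (j+2) (by omega)]
    rw [if_pos (by omega : 1 ≤ m+1), if_neg (by omega : ¬ (p+1 ≤ m+1)),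
      if_neg (by omega : ¬ (p+1 ≤ m+1))]
    simp only [if_neg (by omega : ¬ j+2 = 0), if_neg (by omega : ¬ j+2 = 1)]
    push_cast
    ring
  · obtain ⟨q, rfl⟩ : ∃ q, n = q+(p+1) := ⟨n-(p+1), by omega⟩
    rw [Rbig p q (j+1)]
    have e1 : q+(p+1)-1 = q+p := by omega
    have e2 : q+(p+1)-(p+1) = q := by omega
    simp only [if_pos (show 1 ≤ q+(p+1) by omega), if_pos (show p+1 ≤ q+(p+1) by omega),
      e1, e2]
    push_cast
    ring

lemma base_case (p : ℕ) : Dser p ^ 2 * Cser p 1 = PowerSeries.X := by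
  have g := geom_sum_mul (PowerSeries.X : PowerSeries ℤ) (p+1)
  have h1 : Dser p ^ 2 * Cser p 1 = Dser p * (Dser p * Cser p 1) := by ring
  rw [h1, PS1]
  have e1 := PS0 p
  rw [Dser] at e1 ⊢
  linear_combination (PowerSeries.X : PowerSeries ℤ)^(p+1) * e1 - g


/-- Generating function of `(c_k(Γ^p_n))_{n ≥ 0}`:
`(1 - x - x^{p+1})^{k+1} · Σ_n c_k(Γ^p_n) x^n = x^{kp - p + k}` in `ℤ[[x]]`. -/
theorem cubeCount_genFun (p k : ℕ) (hp : 1 ≤ p) (hk : 1 ≤ k) :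
    ((1 : PowerSeries ℤ) - PowerSeries.X - PowerSeries.X ^ (p + 1)) ^ (k + 1) *
        PowerSeries.mk (fun n => (cubeCount p n k : ℤ)) =
      PowerSeries.X ^ (k * p - p + k) := by
  show Dser p ^ (k+1) * Cser p k = PowerSeries.X ^ (k * p - p + k)
  induction k, hk using Nat.le_induction with
  | base =>
    rw [show 1 * p - p + 1 = 1 by omega, pow_one]
    exact base_case p
  | succ k hk IH =>
    obtain ⟨j, rfl⟩ : ∃ j, k = j+1 := ⟨k-1, by omega⟩
    have c1 : Dser p ^ (j+1+1+1) * Cser p (j+1+1)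
        = Dser p ^ (j+2) * (Dser p * Cser p (j+2)) := by ring
    rw [c1, PSk p j]
    have c2 : Dser p ^ (j+2) * (PowerSeries.X^(p+1) * Cser p (j+1))
        = PowerSeries.X^(p+1) * (Dser p ^ (j+1+1) * Cser p (j+1)) := by ring
    rw [c2, IH, ← pow_add]
    congr 1
    have h1 : (j+1)*p = j*p + p := by ring
    have h2 : (j+1+1)*p = j*p + 2*p := by ring
    omega
end

section
/- For every integer p ≥ 1, the distance cube polynomials of the Fibonacci p-cubes satisfy the formal power series identity (1 − t − (q+x)·t^{p+1}) · Σ_{n≥0} D_{Γ^p_n}(x,q) t^n = 1 + (q+x)·t + (q+x)·t^2 + ⋯ + (q+x)·t^p, as power series in t with coefficients in the polynomial ring ℤ[x,q]. -/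
open Finset MvPolynomial

/-- `p`-separated subsets of ℕ. -/
def SepSet (p : ℕ) (T : Finset ℕ) : Prop := ∀ i ∈ T, ∀ j ∈ T, i < j → i + p + 1 ≤ j

instance (p : ℕ) : DecidablePred (SepSet p) := fun _ => by unfold SepSet; infer_instance

def seps (p n : ℕ) : Finset (Finset ℕ) := (Finset.range n).powerset.filter (SepSet p)

noncomputable def Epoly (p n : ℕ) : MvPolynomial (Fin 2) ℤ :=
  ∑ T ∈ seps p n, (X 1 + X 0) ^ T.card

lemma Epoly_zero (p : ℕ) : Epoly p 0 = 1 := by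
  have : seps p 0 = {∅} := by
    ext T
    simp [seps, SepSet, Finset.subset_empty]
    intro h
    simp [h]
  simp [Epoly, this]

lemma mem_seps {p n : ℕ} {T : Finset ℕ} :
    T ∈ seps p n ↔ T ⊆ Finset.range n ∧ SepSet p T := by
  simp [seps]

lemma Epoly_rec (p n : ℕ) :
    Epoly p (n + 1) = Epoly p n + (X 1 + X 0) * Epoly p (n - p) := by
  classical
  rw [Epoly, ← Finset.sum_filter_add_sum_filter_not (seps p (n+1)) (fun T => n ∈ T)]
  have h1 : (seps p (n+1)).filter (fun T => ¬ n ∈ T) = seps p n := by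
    ext T
    simp only [Finset.mem_filter, mem_seps]
    constructor
    · rintro ⟨⟨hs, hsep⟩, hn⟩
      refine ⟨fun i hi => ?_, hsep⟩
      have := hs hi
      simp only [Finset.mem_range] at this ⊢
      rcases Nat.lt_succ_iff_lt_or_eq.mp this with h | h
      · exact h
      · exact absurd (h ▸ hi) hn
    · rintro ⟨hs, hsep⟩
      refine ⟨⟨fun i hi => ?_, hsep⟩, fun hn => ?_⟩
      · have := hs hi; simp only [Finset.mem_range] at this ⊢; omega
      · have := hs hn; simp at this
  have h2 : ∑ T ∈ (seps p (n+1)).filter (fun T => n ∈ T), ((X 1 + X 0 : MvPolynomial (Fin 2) ℤ)) ^ T.card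
      = (X 1 + X 0) * Epoly p (n - p) := by
    rw [Epoly, Finset.mul_sum]
    refine Finset.sum_bij' (fun T _ => T.erase n) (fun T' _ => insert n T') ?_ ?_ ?_ ?_ ?_
    · rintro T hT
      simp only [Finset.mem_filter, mem_seps] at hT
      obtain ⟨⟨hs, hsep⟩, hn⟩ := hT
      rw [mem_seps]
      constructor
      · intro i hi
        rw [Finset.mem_erase] at hi
        have h3 := hsep i hi.2 n hn
        have h4 := hs hi.2
        simp only [Finset.mem_range] at h4 ⊢
        have : i < n := by omega
        have := h3 this
        omega
      · intro i hi j hj hij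
        exact hsep i (Finset.mem_of_mem_erase hi) j (Finset.mem_of_mem_erase hj) hij
    · rintro T' hT'
      rw [mem_seps] at hT'
      obtain ⟨hs, hsep⟩ := hT'
      have hnotmem : n ∉ T' := by
        intro h; have := hs h; simp only [Finset.mem_range] at this; omega
      simp only [Finset.mem_filter, mem_seps]
      refine ⟨⟨fun i hi => ?_, ?_⟩, Finset.mem_insert_self _ _⟩
      · rw [Finset.mem_insert] at hi
        rcases hi with rfl | hi
        · simp
        · have := hs hi; simp only [Finset.mem_range] at this ⊢; omega
      · intro i hi j hj hij
        rw [Finset.mem_insert] at hi hj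
        rcases hi with rfl | hi
        · rcases hj with rfl | hj
          · omega
          · have := hs hj; simp only [Finset.mem_range] at this; omega
        · rcases hj with rfl | hj
          · have := hs hi; simp only [Finset.mem_range] at this; omega
          · exact hsep i hi j hj hij
    · rintro T hT
      simp only [Finset.mem_filter] at hT
      exact Finset.insert_erase hT.2
    · rintro T' hT'
      rw [mem_seps] at hT'
      have hnotmem : n ∉ T' := by
        intro h; have := hT'.1 h; simp only [Finset.mem_range] at this; omega
      exact Finset.erase_insert hnotmem
    · rintro T hT
      simp only [Finset.mem_filter] at hT
      have : T.card = (T.erase n).card + 1 := by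
        rw [Finset.card_erase_of_mem hT.2]
        have : 0 < T.card := Finset.card_pos.mpr ⟨n, hT.2⟩
        omega
      rw [this, pow_succ]
      ring
  rw [h2, h1, ← Epoly]
  ring

----------------------------------------------------------------
def pairsF (p n : ℕ) : Finset ((Fin n → Bool) × (Fin n → Bool)) :=
  Finset.univ.filter fun bt =>
    IsFibStr p bt.1 ∧ IsFibStr p bt.2 ∧ ∀ i, bt.1 i = true → bt.2 i = true

def kf {n : ℕ} (bt : (Fin n → Bool) × (Fin n → Bool)) : ℕ :=
  (Finset.univ.filter fun i => bt.1 i ≠ bt.2 i).card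

def supp {n : ℕ} (u : Fin n → Bool) : Finset ℕ :=
  (Finset.univ.filter fun i => u i = true).map ⟨Fin.val, Fin.val_injective⟩

lemma mem_supp {n : ℕ} (u : Fin n → Bool) (j : ℕ) :
    j ∈ supp u ↔ ∃ h : j < n, u ⟨j, h⟩ = true := by
  simp only [supp, Finset.mem_map, Finset.mem_filter, Finset.mem_univ, true_and,
    Function.Embedding.coeFn_mk]
  constructor
  · rintro ⟨a, ha, rfl⟩; exact ⟨a.isLt, by simpa using ha⟩
  · rintro ⟨h, hu⟩; exact ⟨⟨j, h⟩, hu, rfl⟩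

def indF (n : ℕ) (A : Finset ℕ) : Fin n → Bool := fun i => decide ((i : ℕ) ∈ A)

lemma supp_indF {n : ℕ} {A : Finset ℕ} (hA : A ⊆ Finset.range n) :
    supp (indF n A) = A := by
  ext j
  rw [mem_supp]
  simp only [indF, decide_eq_true_eq]
  constructor
  · rintro ⟨h, hj⟩; exact hj
  · intro hj
    have := hA hj
    rw [Finset.mem_range] at this
    exact ⟨this, hj⟩

lemma indF_supp {n : ℕ} (u : Fin n → Bool) : indF n (supp u) = u := by
  funext i
  simp only [indF, mem_supp]
  by_cases h : u i = true
  · simp only [h]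
    rw [decide_eq_true_eq]
    exact ⟨i.isLt, by simpa using h⟩
  · simp only [Bool.not_eq_true] at h
    rw [h, decide_eq_false_iff_not]
    rintro ⟨hlt, hu⟩
    rw [show (⟨(i:ℕ), hlt⟩ : Fin n) = i from Fin.ext rfl] at hu
    rw [h] at hu; exact Bool.false_ne_true hu

lemma supp_subset_range {n : ℕ} (u : Fin n → Bool) : supp u ⊆ Finset.range n := by
  intro j hj
  rw [mem_supp] at hj
  rw [Finset.mem_range]
  exact hj.1

lemma wt_eq_card_supp {n : ℕ} (u : Fin n → Bool) : wt u = (supp u).card := by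
  rw [wt, supp, Finset.card_map]

lemma fib_iff_sep {p n : ℕ} (u : Fin n → Bool) : IsFibStr p u ↔ SepSet p (supp u) := by
  constructor
  · intro h i hi j hj hij
    rw [mem_supp] at hi hj
    obtain ⟨hi1, hi2⟩ := hi
    obtain ⟨hj1, hj2⟩ := hj
    exact h ⟨i, hi1⟩ ⟨j, hj1⟩ hi2 hj2 hij
  · intro h i j hi hj hij
    refine h i ?_ j ?_ hij
    · rw [mem_supp]; exact ⟨i.isLt, by simpa using hi⟩
    · rw [mem_supp]; exact ⟨j.isLt, by simpa using hj⟩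

lemma mono_iff_supp {n : ℕ} (b t : Fin n → Bool) :
    (∀ i, b i = true → t i = true) ↔ supp b ⊆ supp t := by
  constructor
  · intro h j hj
    rw [mem_supp] at hj ⊢
    obtain ⟨h1, h2⟩ := hj
    exact ⟨h1, h _ h2⟩
  · intro h i hi
    have : (i : ℕ) ∈ supp b := by rw [mem_supp]; exact ⟨i.isLt, by simpa using hi⟩
    have := h this
    rw [mem_supp] at this
    obtain ⟨h1, h2⟩ := this
    simpa using h2

lemma kf_eq_card {n : ℕ} (b t : Fin n → Bool) (h : ∀ i, b i = true → t i = true) :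
    kf (b, t) = (supp t \ supp b).card := by
  have : supp t \ supp b
      = (Finset.univ.filter fun i => b i ≠ t i).map ⟨Fin.val, Fin.val_injective⟩ := by
    ext j
    simp only [Finset.mem_sdiff, mem_supp, Finset.mem_map, Finset.mem_filter,
      Finset.mem_univ, true_and, Function.Embedding.coeFn_mk]
    constructor
    · rintro ⟨⟨hlt, ht⟩, hb⟩
      refine ⟨⟨j, hlt⟩, ?_, rfl⟩
      intro hbt
      exact hb ⟨hlt, hbt.trans ht⟩
    · rintro ⟨a, ha, rfl⟩
      have hbt : b a = false ∧ t a = true := by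
        cases hba : b a with
        | true => exact absurd (hba.trans (h a hba).symm) ha
        | false =>
          cases hta : t a with
          | true => exact ⟨rfl, rfl⟩
          | false => exact absurd (hba.trans hta.symm) ha
      constructor
      · exact ⟨a.isLt, by rw [Fin.eta]; exact hbt.2⟩
      · rintro ⟨hlt, hba⟩
        rw [Fin.eta, hbt.1] at hba
        exact Bool.false_ne_true hba
  rw [kf, this, Finset.card_map]

lemma kf_le {n : ℕ} (bt : (Fin n → Bool) × (Fin n → Bool)) : kf bt ≤ n := by
  have := Finset.card_filter_le (Finset.univ : Finset (Fin n)) (fun i => bt.1 i ≠ bt.2 i)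
  simpa [kf] using this

lemma wt_le {n : ℕ} (u : Fin n → Bool) : wt u ≤ n := by
  have := Finset.card_filter_le (Finset.univ : Finset (Fin n)) (fun i => u i = true)
  simpa [wt] using this

lemma cubeCountD_eq_card (p n k d : ℕ) :
    cubeCountD p n k d
      = ((pairsF p n).filter fun bt => kf bt = k ∧ wt bt.1 = d).card := by
  classical
  rw [cubeCountD, Nat.card_eq_fintype_card, Fintype.card_subtype]
  congr 1
  ext bt
  simp only [Finset.mem_filter, Finset.mem_univ, true_and]
  simp only [pairsF, kf, Finset.mem_filter, Finset.mem_univ, true_and]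
  tauto

lemma distCubePoly_eq_sum_pairs (p n : ℕ) :
    distCubePoly p n = ∑ bt ∈ pairsF p n, X 0 ^ kf bt * X 1 ^ wt bt.1 := by
  classical
  have maps : ∀ bt ∈ pairsF p n,
      (kf bt, wt bt.1) ∈ Finset.range (n+1) ×ˢ Finset.range (n+1) := by
    intro bt _
    simp only [Finset.mem_product, Finset.mem_range]
    exact ⟨Nat.lt_succ_of_le (kf_le bt), Nat.lt_succ_of_le (wt_le bt.1)⟩
  rw [← Finset.sum_fiberwise_of_maps_to maps (fun bt => X 0 ^ kf bt * X 1 ^ wt bt.1)]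
  rw [distCubePoly, ← Finset.sum_product']
  refine Finset.sum_congr rfl ?_
  rintro ⟨k, d⟩ _
  have : ∑ bt ∈ (pairsF p n).filter (fun bt => (kf bt, wt bt.1) = (k, d)),
      (X 0 : MvPolynomial (Fin 2) ℤ) ^ kf bt * X 1 ^ wt bt.1
      = ∑ _bt ∈ (pairsF p n).filter (fun bt => (kf bt, wt bt.1) = (k, d)),
      (X 0 : MvPolynomial (Fin 2) ℤ) ^ k * X 1 ^ d := by
    refine Finset.sum_congr rfl ?_
    intro bt hbt
    simp only [Finset.mem_filter, Prod.mk.injEq] at hbt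
    rw [hbt.2.1, hbt.2.2]
  rw [this, Finset.sum_const, nsmul_eq_mul, cubeCountD_eq_card]
  have : (pairsF p n).filter (fun bt => (kf bt, wt bt.1) = (k, d))
      = (pairsF p n).filter (fun bt => kf bt = k ∧ wt bt.1 = d) := by
    apply Finset.filter_congr
    intro bt _
    simp [Prod.ext_iff]
  rw [this, mul_assoc]

lemma sum_pairs_eq_Epoly (p n : ℕ) :
    ∑ bt ∈ pairsF p n, (X 0 : MvPolynomial (Fin 2) ℤ) ^ kf bt * X 1 ^ wt bt.1
      = Epoly p n := by
  classical
  have step1 : ∑ bt ∈ pairsF p n, (X 0 : MvPolynomial (Fin 2) ℤ) ^ kf bt * X 1 ^ wt bt.1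
      = ∑ TS ∈ (seps p n).sigma (fun T => T.powerset),
          (X 0 : MvPolynomial (Fin 2) ℤ) ^ (TS.1 \ TS.2).card * X 1 ^ TS.2.card := by
    refine Finset.sum_bij' (fun bt _ => ⟨supp bt.2, supp bt.1⟩)
      (fun TS _ => (indF n TS.2, indF n TS.1)) ?_ ?_ ?_ ?_ ?_
    · rintro ⟨b, t⟩ hbt
      simp only [pairsF, Finset.mem_filter, Finset.mem_univ, true_and] at hbt
      obtain ⟨hb, ht, hm⟩ := hbt
      rw [Finset.mem_sigma, mem_seps]
      exact ⟨⟨supp_subset_range t, (fib_iff_sep t).mp ht⟩,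
        Finset.mem_powerset.mpr ((mono_iff_supp b t).mp hm)⟩
    · rintro ⟨T, S⟩ hTS
      rw [Finset.mem_sigma, mem_seps, Finset.mem_powerset] at hTS
      obtain ⟨⟨hTr, hTsep⟩, hST⟩ := hTS
      have hSr : S ⊆ Finset.range n := hST.trans hTr
      simp only [pairsF, Finset.mem_filter, Finset.mem_univ, true_and]
      refine ⟨?_, ?_, ?_⟩
      · rw [fib_iff_sep, supp_indF hSr]
        intro i hi j hj hij
        exact hTsep i (hST hi) j (hST hj) hij
      · rw [fib_iff_sep, supp_indF hTr]
        exact hTsep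
      · rw [mono_iff_supp, supp_indF hSr, supp_indF hTr]
        exact hST
    · rintro ⟨b, t⟩ _
      simp only
      rw [indF_supp, indF_supp]
    · rintro ⟨T, S⟩ hTS
      rw [Finset.mem_sigma, mem_seps, Finset.mem_powerset] at hTS
      obtain ⟨⟨hTr, _⟩, hST⟩ := hTS
      have hSr : S ⊆ Finset.range n := hST.trans hTr
      simp only
      rw [supp_indF hSr, supp_indF hTr]
    · rintro ⟨b, t⟩ hbt
      simp only [pairsF, Finset.mem_filter, Finset.mem_univ, true_and] at hbt
      rw [kf_eq_card b t hbt.2.2, wt_eq_card_supp, Finset.sdiff_eq_sdiff_iff_inter_eq_inter.mpr rfl]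
  rw [step1, Finset.sum_sigma, Epoly]
  refine Finset.sum_congr rfl ?_
  intro T _
  have expand := Finset.prod_add (fun _ => (X 1 : MvPolynomial (Fin 2) ℤ))
    (fun _ => (X 0 : MvPolynomial (Fin 2) ℤ)) T
  simp only [Finset.prod_const] at expand
  rw [expand]
  refine Finset.sum_congr rfl ?_
  intro S _
  ring

lemma distCubePoly_eq_Epoly (p n : ℕ) : distCubePoly p n = Epoly p n :=
  (distCubePoly_eq_sum_pairs p n).trans (sum_pairs_eq_Epoly p n)


/-- Generating function of the distance cube polynomials (with `x = X 0`, `q = X 1`):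
`(1 - t - (q+x)·t^{p+1}) · Σ_n D_{Γ^p_n}(x,q) t^n = 1 + (q+x)·t + ⋯ + (q+x)·t^p`. -/
theorem distCubePoly_genFun (p : ℕ) (hp : 1 ≤ p) :
    ((1 : PowerSeries (MvPolynomial (Fin 2) ℤ)) - PowerSeries.X -
        PowerSeries.C (R := MvPolynomial (Fin 2) ℤ) (MvPolynomial.X 1 + MvPolynomial.X 0) *
          PowerSeries.X ^ (p + 1)) *
        PowerSeries.mk (fun n => distCubePoly p n) =
      1 + ∑ i ∈ Finset.Icc 1 p,
        PowerSeries.C (R := MvPolynomial (Fin 2) ℤ) (MvPolynomial.X 1 + MvPolynomial.X 0) *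
          PowerSeries.X ^ i := by
    classical
  set a : MvPolynomial (Fin 2) ℤ := MvPolynomial.X 1 + MvPolynomial.X 0 with ha
  set M : PowerSeries (MvPolynomial (Fin 2) ℤ) :=
    PowerSeries.mk (fun n => distCubePoly p n) with hM
  have key : M = (1 + ∑ i ∈ Finset.Icc 1 p,
      PowerSeries.C (R := MvPolynomial (Fin 2) ℤ) a * PowerSeries.X ^ i)
      + PowerSeries.X * M
      + PowerSeries.C (R := MvPolynomial (Fin 2) ℤ) a * M * PowerSeries.X ^ (p + 1) := by
    refine PowerSeries.ext fun n => ?_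
    simp only [map_add, hM, PowerSeries.coeff_mk, PowerSeries.coeff_one, map_sum]
    have hsum : ∀ m : ℕ, (∑ i ∈ Finset.Icc 1 p, (PowerSeries.coeff m)
        (PowerSeries.C (R := MvPolynomial (Fin 2) ℤ) a * PowerSeries.X ^ i))
        = if m ∈ Finset.Icc 1 p then a else 0 := by
      intro m
      rw [← Finset.sum_ite_eq (Finset.Icc 1 p) m (fun _ => a)]
      refine Finset.sum_congr rfl ?_
      intro i _
      rw [PowerSeries.coeff_C_mul, PowerSeries.coeff_X_pow]
      by_cases h : m = i
      · simp [h]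
      · simp [h, Ne.symm h]
    rw [hsum]
    rw [PowerSeries.coeff_mul_X_pow', PowerSeries.coeff_C_mul, PowerSeries.coeff_mk]
    cases n with
    | zero =>
      have h0 : ¬ (0 ∈ Finset.Icc 1 p) := by simp
      have h1 : ¬ (p + 1 ≤ 0) := by omega
      rw [if_neg h0, if_neg h1, distCubePoly_eq_Epoly, Epoly_zero]
      simp [PowerSeries.coeff_zero_X_mul]
    | succ m =>
      rw [PowerSeries.coeff_succ_X_mul, PowerSeries.coeff_mk,
        distCubePoly_eq_Epoly, distCubePoly_eq_Epoly, Epoly_rec]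
      rw [if_neg (Nat.succ_ne_zero m)]
      by_cases h : m + 1 ≤ p
      · have h1 : m + 1 ∈ Finset.Icc 1 p := by simp [h]
        have h2 : ¬ (p + 1 ≤ m + 1) := by omega
        have h3 : m - p = 0 := by omega
        rw [if_pos h1, if_neg h2, h3, Epoly_zero]
        ring
      · have h1 : ¬ (m + 1 ∈ Finset.Icc 1 p) := by simp; omega
        have h2 : p + 1 ≤ m + 1 := by omega
        have h3 : m + 1 - (p + 1) = m - p := by omega
        rw [if_neg h1, if_pos h2, h3, distCubePoly_eq_Epoly]
        ring
  linear_combination key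
end

section
/- For every integer p ≥ 1 and all integers n ≥ 0, k ≥ 0 and d ≥ 0, the number c_{k,d}(Γ^p_n) of induced subgraphs of the Fibonacci p-cube Γ^p_n isomorphic to the hypercube Q_k whose bottom vertex has Hamming weight d equals C(n − (k+d)p + p, k+d) · C(k+d, k). -/
/-- Iterated gap bound. -/
lemma gap_iter {m p : ℕ} (g : Fin m → ℕ)
    (H : ∀ i j : Fin m, (i : ℕ) < j → g i + p + 1 ≤ g j) :
    ∀ i j : Fin m, (i : ℕ) < j → g i + ((j : ℕ) - i) * (p + 1) ≤ g j := by
  suffices h : ∀ v : ℕ, ∀ i j : Fin m, (j : ℕ) = v → (i : ℕ) < j →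
      g i + ((j : ℕ) - i) * (p + 1) ≤ g j by
    exact fun i j => h (j : ℕ) i j rfl
  intro v
  induction v with
  | zero => intro i j hj hij; omega
  | succ v ih =>
    intro i j hj hij
    rcases eq_or_lt_of_le (Nat.succ_le_of_lt hij) with h | h
    · have h1 := H i j hij
      have h2 : (j : ℕ) - i = 1 := by omega
      rw [h2, one_mul]; exact h1
    · have hv : v < m := by omega
      have h1 := ih i ⟨v, hv⟩ rfl (by simpa using (by omega : (i:ℕ) < v))
      have h2 := H ⟨v, hv⟩ j (by simp [hj])
      have he : (j : ℕ) - i = (v - (i:ℕ)) + 1 := by omega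
      rw [he, add_mul, one_mul]
      simp only at h1 h2
      omega

/-- Lower bound from gaps. -/
lemma gap_lb {m p : ℕ} (g : Fin m → ℕ)
    (H : ∀ i j : Fin m, (i : ℕ) < j → g i + p + 1 ≤ g j) (i : Fin m) :
    (i : ℕ) * (p + 1) ≤ g i := by
  rcases Nat.eq_zero_or_pos (i : ℕ) with h | h
  · simp [h]
  · have h0 : (0 : ℕ) < m := lt_of_le_of_lt (Nat.zero_le _) i.2
    have := gap_iter g H ⟨0, h0⟩ i (by simpa using h)
    simp only [Nat.sub_zero, Fin.val_mk] at this
    omega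


/-- Strictly monotone maps `Fin m → Fin N` are equinumerous with `m`-subsets of `Fin N`. -/
noncomputable def strictMonoEquivFinset (m N : ℕ) :
    {h : Fin m → Fin N // StrictMono h} ≃ {S : Finset (Fin N) // S.card = m} where
  toFun h := ⟨Finset.image h.1 Finset.univ, by
    rw [Finset.card_image_of_injective _ h.2.injective, Finset.card_univ, Fintype.card_fin]⟩
  invFun S := ⟨S.1.orderEmbOfFin S.2, (S.1.orderEmbOfFin S.2).strictMono⟩
  left_inv h := by
    apply Subtype.ext
    exact (Finset.orderEmbOfFin_unique _ (fun x => Finset.mem_image_of_mem _ (Finset.mem_univ x))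
      h.2).symm
  right_inv S := by
    apply Subtype.ext
    have := Finset.range_orderEmbOfFin S.1 S.2
    ext x
    simp only [Finset.mem_image, Finset.mem_univ, true_and]
    constructor
    · rintro ⟨i, rfl⟩; exact Finset.orderEmbOfFin_mem _ _ _
    · intro hx
      have : x ∈ Set.range (S.1.orderEmbOfFin S.2) := by rw [this]; exact hx
      obtain ⟨i, hi⟩ := this
      exact ⟨i, hi⟩

lemma card_strictMono (m N : ℕ) :
    Nat.card {h : Fin m → Fin N // StrictMono h} = N.choose m := by
  rw [Nat.card_congr (strictMonoEquivFinset m N), Nat.card_eq_fintype_card,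
    Fintype.card_finset_len, Fintype.card_fin]

/-- Gapped maps into `Fin n` correspond to strictly monotone maps into `Fin (n + p - m*p)`. -/
def gapEquivStrictMono (m n p : ℕ) (hmn : m * p ≤ n + p) :
    {g : Fin m → Fin n // ∀ i j : Fin m, (i : ℕ) < j → (g i : ℕ) + p + 1 ≤ (g j : ℕ)} ≃
    {h : Fin m → Fin (n + p - m * p) // StrictMono h} where
  toFun g := by
    refine ⟨fun i => ⟨(g.1 i : ℕ) - (i : ℕ) * p, ?_⟩, ?_⟩
    · -- upper bound
      have hm1 : 1 ≤ m := Nat.one_le_iff_ne_zero.mpr (by rintro rfl; exact absurd i.2 (by omega))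
      have hub : (g.1 i : ℕ) + ((m - 1) - (i : ℕ)) * p < n := by
        rcases eq_or_lt_of_le (Nat.le_sub_one_of_lt i.2) with h | h
        · rw [← h]; simpa using (g.1 i).2
        · have hlast : m - 1 < m := by omega
          have h1 := gap_iter (fun i => (g.1 i : ℕ)) g.2 i ⟨m - 1, hlast⟩ (by simpa using h)
          have h2 : ((g.1 ⟨m - 1, hlast⟩ : ℕ)) < n := (g.1 _).2
          simp only [Fin.val_mk] at h1
          have he : (m - 1 - (i : ℕ)) * (p + 1) = (m - 1 - (i : ℕ)) * p + (m - 1 - (i : ℕ)) := by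
            ring
          omega
      have hlb := gap_lb (fun i => (g.1 i : ℕ)) g.2 i
      have he1 : (i : ℕ) * (p + 1) = (i : ℕ) * p + i := by ring
      have he2 : m * p = (i : ℕ) * p + ((m - 1) - (i : ℕ)) * p + p := by
        have h := ((i : ℕ) + ((m - 1) - (i : ℕ)) + 1).mul_comm p
        have he : ((i : ℕ) + ((m - 1) - (i : ℕ)) + 1) * p
            = (i : ℕ) * p + ((m - 1) - (i : ℕ)) * p + p := by ring
        rw [← he]; congr 1; omega
      omega
    · -- strict mono
      intro i j hij
      rw [Fin.lt_def] at hij ⊢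
      have h1 := gap_iter (fun i => (g.1 i : ℕ)) g.2 i j hij
      have hlb := gap_lb (fun i => (g.1 i : ℕ)) g.2 i
      simp only [Fin.val_mk] at h1 hlb ⊢
      have he1 : ((j : ℕ) - (i : ℕ)) * (p + 1) = ((j : ℕ) - (i : ℕ)) * p + ((j : ℕ) - (i : ℕ)) := by
        ring
      have he2 : (j : ℕ) * p = (i : ℕ) * p + ((j : ℕ) - (i : ℕ)) * p := by
        have he : ((i : ℕ) + ((j : ℕ) - (i : ℕ))) * p
            = (i : ℕ) * p + ((j : ℕ) - (i : ℕ)) * p := by ring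
        rw [← he]; congr 1; omega
      have he3 : (i : ℕ) * (p + 1) = (i : ℕ) * p + i := by ring
      omega
  invFun h := by
    refine ⟨fun i => ⟨(h.1 i : ℕ) + (i : ℕ) * p, ?_⟩, ?_⟩
    · have hm1 : 1 ≤ m := Nat.one_le_iff_ne_zero.mpr (by rintro rfl; exact absurd i.2 (by omega))
      have h1 : (h.1 i : ℕ) < n + p - m * p := (h.1 i).2
      have h2 : (i : ℕ) * p ≤ (m - 1) * p := Nat.mul_le_mul_right _ (by omega)
      have h3 : (m - 1) * p + p = m * p := by
        have : m - 1 + 1 = m := by omega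
        calc (m - 1) * p + p = (m - 1 + 1) * p := by ring
        _ = m * p := by rw [this]
      omega
    · intro i j hij
      have hsm : ∀ a b : Fin m, (a : ℕ) < b → (h.1 a : ℕ) + 0 + 1 ≤ (h.1 b : ℕ) := by
        intro a b hab
        have := h.2 (show a < b from hab)
        rw [Fin.lt_def] at this
        omega
      have h1 := gap_iter (p := 0) (fun i => (h.1 i : ℕ)) hsm i j hij
      simp only [Fin.val_mk, Nat.zero_add, mul_one] at h1 ⊢
      have h2 : ((i : ℕ) + 1) * p ≤ (j : ℕ) * p := Nat.mul_le_mul_right _ (by omega)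
      have h3 : ((i : ℕ) + 1) * p = (i : ℕ) * p + p := by ring
      omega
  left_inv g := by
    apply Subtype.ext
    funext i
    apply Fin.ext
    have hlb := gap_lb (fun i => (g.1 i : ℕ)) g.2 i
    have he3 : (i : ℕ) * (p + 1) = (i : ℕ) * p + i := by ring
    simp only [Fin.val_mk] at hlb ⊢
    omega
  right_inv h := by
    apply Subtype.ext
    funext i
    apply Fin.ext
    simp only [Fin.val_mk]
    omega

lemma gapStrictMono {m n p : ℕ} (g : Fin m → Fin n)
    (H : ∀ i j : Fin m, (i : ℕ) < j → (g i : ℕ) + p + 1 ≤ (g j : ℕ)) : StrictMono g := by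
  intro i j hij
  rw [Fin.lt_def] at hij
  have := H i j hij
  rw [Fin.lt_def]
  omega

/-- Fibonacci strings of weight `m` correspond to gapped maps `Fin m → Fin n`. -/
noncomputable def fibStrEquivGap (p n m : ℕ) :
    {u : Fin n → Bool // IsFibStr p u ∧ wt u = m} ≃
    {g : Fin m → Fin n // ∀ i j : Fin m, (i : ℕ) < j → (g i : ℕ) + p + 1 ≤ (g j : ℕ)} where
  toFun u := by
    refine ⟨(Finset.univ.filter fun i => u.1 i = true).orderEmbOfFin u.2.2, ?_⟩
    intro i j hij
    set s := Finset.univ.filter fun i => u.1 i = true with hs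
    have ha := Finset.mem_filter.mp (s.orderEmbOfFin_mem u.2.2 i)
    have hb := Finset.mem_filter.mp (s.orderEmbOfFin_mem u.2.2 j)
    have hlt : s.orderEmbOfFin u.2.2 i < s.orderEmbOfFin u.2.2 j :=
      (s.orderEmbOfFin u.2.2).strictMono (show i < j from hij)
    exact u.2.1 _ _ ha.2 hb.2 hlt
  invFun g := by
    refine ⟨fun i => decide (i ∈ Finset.image g.1 Finset.univ), ?_, ?_⟩
    · intro a b ha hb hab
      rw [decide_eq_true_iff, Finset.mem_image] at ha hb
      obtain ⟨i, -, rfl⟩ := ha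
      obtain ⟨j, -, rfl⟩ := hb
      have hij : i < j := by
        by_contra hc
        rcases lt_or_eq_of_le (not_lt.mp hc) with h | h
        · exact absurd (Fin.lt_def.mp ((gapStrictMono g.1 g.2) h)) (by omega)
        · exact absurd hab (by rw [h]; omega)
      exact g.2 i j (Fin.lt_def.mp hij)
    · show (Finset.univ.filter fun i => decide (i ∈ Finset.image g.1 Finset.univ) = true).card = m
      have : (Finset.univ.filter fun i => decide (i ∈ Finset.image g.1 Finset.univ) = true)
          = Finset.image g.1 Finset.univ := by
        ext x; simp
      rw [this, Finset.card_image_of_injective _ (gapStrictMono g.1 g.2).injective,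
        Finset.card_univ, Fintype.card_fin]
  left_inv u := by
    apply Subtype.ext
    funext i
    set s := Finset.univ.filter fun i => u.1 i = true with hs
    have himg : Finset.image (s.orderEmbOfFin u.2.2) Finset.univ = s := by
      ext x
      simp only [Finset.mem_image, Finset.mem_univ, true_and]
      constructor
      · rintro ⟨j, rfl⟩; exact s.orderEmbOfFin_mem u.2.2 j
      · intro hx
        have : x ∈ Set.range (s.orderEmbOfFin u.2.2) := by
          exact (Set.ext_iff.mp (Finset.range_orderEmbOfFin s u.2.2) x).mpr hx
        obtain ⟨j, hj⟩ := this
        exact ⟨j, hj⟩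
    show decide (i ∈ Finset.image (s.orderEmbOfFin u.2.2) Finset.univ) = u.1 i
    rw [himg]
    rcases hu : u.1 i with _ | _
    · simp [hs, hu]
    · simp [hs, hu]
  right_inv g := by
    apply Subtype.ext
    set s := Finset.univ.filter
        fun i => (decide (i ∈ Finset.image g.1 Finset.univ) : Bool) = true with hs
    have hcard : s.card = m := by
      have : s = Finset.image g.1 Finset.univ := by ext x; simp [hs]
      rw [this, Finset.card_image_of_injective _ (gapStrictMono g.1 g.2).injective,
        Finset.card_univ, Fintype.card_fin]
    refine (Finset.orderEmbOfFin_unique _ (fun x => ?_) (gapStrictMono g.1 g.2)).symm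
    simp [hs]

section helpers
variable {n p k d : ℕ}

/-- bottom string obtained from `t` by zeroing coordinates in `D`. -/
def btm {n : ℕ} (t : Fin n → Bool) (D : Finset (Fin n)) : Fin n → Bool :=
  fun i => if i ∈ D then false else t i

lemma wt_top (b t : Fin n → Bool) (H3 : ∀ i, b i = true → t i = true)
    (H4 : (Finset.univ.filter fun i => b i ≠ t i).card = k) (H5 : wt b = d) :
    wt t = k + d := by
  show (Finset.univ.filter fun i => t i = true).card = k + d
  have hunion : (Finset.univ.filter fun i => t i = true)
      = (Finset.univ.filter fun i => b i ≠ t i) ∪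
        (Finset.univ.filter fun i => b i = true) := by
    ext i
    have := H3 i
    simp only [Finset.mem_union, Finset.mem_filter, Finset.mem_univ, true_and]
    cases hb : b i <;> cases ht : t i <;> simp_all
  have hdisj : Disjoint (Finset.univ.filter fun i => b i ≠ t i)
      (Finset.univ.filter fun i => b i = true) := by
    rw [Finset.disjoint_left]
    intro i hi1 hi2
    have := H3 i
    simp only [Finset.mem_filter, Finset.mem_univ, true_and] at hi1 hi2
    simp_all
  rw [hunion, Finset.card_union_of_disjoint hdisj, H4]
  rw [wt] at H5
  rw [H5]

lemma diff_mem (b t : Fin n → Bool) (H3 : ∀ i, b i = true → t i = true)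
    (H4 : (Finset.univ.filter fun i => b i ≠ t i).card = k) :
    (Finset.univ.filter fun i => b i ≠ t i) ∈
      (Finset.univ.filter fun i => t i = true).powersetCard k := by
  rw [Finset.mem_powersetCard]
  refine ⟨?_, H4⟩
  intro i hi
  have := H3 i
  simp only [Finset.mem_filter, Finset.mem_univ, true_and] at hi ⊢
  cases hb : b i <;> cases ht : t i <;> simp_all

lemma btm_le (t : Fin n → Bool) (D : Finset (Fin n)) :
    ∀ i, btm t D i = true → t i = true := by
  intro i hi
  rw [btm] at hi
  split_ifs at hi
  exact hi

lemma btm_fib (t : Fin n → Bool) (D : Finset (Fin n)) (Ht1 : IsFibStr p t) :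
    IsFibStr p (btm t D) :=
  fun i j hi hj hij => Ht1 i j (btm_le t D i hi) (btm_le t D j hj) hij

lemma btm_diff (t : Fin n → Bool) (D : Finset (Fin n)) (hDt : ∀ i ∈ D, t i = true) :
    (Finset.univ.filter fun i => btm t D i ≠ t i) = D := by
  ext i
  simp only [Finset.mem_filter, Finset.mem_univ, true_and, btm]
  by_cases hi : i ∈ D
  · simp [hi, hDt i hi]
  · simp [hi]

lemma btm_wt (t : Fin n → Bool) (D : Finset (Fin n))
    (hDsub : D ⊆ Finset.univ.filter fun i => t i = true) (hDcard : D.card = k)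
    (Ht2 : wt t = k + d) : wt (btm t D) = d := by
  show (Finset.univ.filter fun i => btm t D i = true).card = d
  have : (Finset.univ.filter fun i => btm t D i = true)
      = (Finset.univ.filter fun i => t i = true) \ D := by
    ext i
    simp only [Finset.mem_filter, Finset.mem_univ, true_and, Finset.mem_sdiff, btm]
    by_cases hi : i ∈ D
    · simp [hi]
    · simp [hi]
  rw [this, Finset.card_sdiff_of_subset hDsub, hDcard]
  rw [wt] at Ht2
  rw [Ht2]
  omega

lemma hDt_of_mem (t : Fin n → Bool) (D : Finset (Fin n))
    (HD : D ∈ (Finset.univ.filter fun i => t i = true).powersetCard k) :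
    ∀ i ∈ D, t i = true := by
  intro i hi
  have := (Finset.mem_powersetCard.mp HD).1 hi
  simp only [Finset.mem_filter, Finset.mem_univ, true_and] at this
  exact this

end helpers

/-- main equivalence. -/
noncomputable def mainEquiv (p n k d : ℕ) :
    {bt : (Fin n → Bool) × (Fin n → Bool) //
      IsFibStr p bt.1 ∧ IsFibStr p bt.2 ∧ (∀ i, bt.1 i = true → bt.2 i = true) ∧
      (Finset.univ.filter fun i => bt.1 i ≠ bt.2 i).card = k ∧ wt bt.1 = d} ≃
    Σ t : {t : Fin n → Bool // IsFibStr p t ∧ wt t = k + d},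
      {D : Finset (Fin n) //
        D ∈ (Finset.univ.filter fun i => t.1 i = true).powersetCard k} where
  toFun bt :=
    ⟨⟨bt.1.2, bt.2.2.1, wt_top bt.1.1 bt.1.2 bt.2.2.2.1 bt.2.2.2.2.1 bt.2.2.2.2.2⟩,
      ⟨Finset.univ.filter fun i => bt.1.1 i ≠ bt.1.2 i,
        diff_mem bt.1.1 bt.1.2 bt.2.2.2.1 bt.2.2.2.2.1⟩⟩
  invFun td :=
    ⟨(btm td.1.1 td.2.1, td.1.1),
      btm_fib td.1.1 td.2.1 td.1.2.1, td.1.2.1, btm_le td.1.1 td.2.1,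
      by rw [btm_diff td.1.1 td.2.1 (hDt_of_mem td.1.1 td.2.1 td.2.2)]
         exact (Finset.mem_powersetCard.mp td.2.2).2,
      btm_wt td.1.1 td.2.1 (Finset.mem_powersetCard.mp td.2.2).1
        (Finset.mem_powersetCard.mp td.2.2).2 td.1.2.2⟩
  left_inv bt := by
    apply Subtype.ext
    refine Prod.ext ?_ rfl
    funext i
    show (if i ∈ Finset.univ.filter (fun j => bt.1.1 j ≠ bt.1.2 j) then false else bt.1.2 i)
      = bt.1.1 i
    have H3 := bt.2.2.2.1 i
    by_cases hi : bt.1.1 i ≠ bt.1.2 i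
    · have hmem : i ∈ Finset.univ.filter fun j => bt.1.1 j ≠ bt.1.2 j := by
        simp only [Finset.mem_filter, Finset.mem_univ, true_and]; exact hi
      rw [if_pos hmem]
      cases hb : bt.1.1 i <;> cases ht : bt.1.2 i <;> simp_all
    · push_neg at hi
      have hmem : i ∉ Finset.univ.filter fun j => bt.1.1 j ≠ bt.1.2 j := by
        simp only [Finset.mem_filter, Finset.mem_univ, true_and]; exact fun h => h hi
      rw [if_neg hmem]
      exact hi.symm
  right_inv td := by
    show Sigma.mk (β := fun t : {t : Fin n → Bool // IsFibStr p t ∧ wt t = k + d} => {D : Finset (Fin n) //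
          D ∈ (Finset.univ.filter fun i => t.1 i = true).powersetCard k}) td.1 _ = Sigma.mk td.1 td.2
    exact congrArg (Sigma.mk td.1) (Subtype.ext
      (btm_diff td.1.1 td.2.1 (hDt_of_mem td.1.1 td.2.1 td.2.2)))

lemma countFib (p n m : ℕ) (hp : 1 ≤ p) :
    Nat.card {u : Fin n → Bool // IsFibStr p u ∧ wt u = m} = (n + p - m * p).choose m := by
  by_cases hmn : m * p ≤ n + p
  · rw [Nat.card_congr ((fibStrEquivGap p n m).trans (gapEquivStrictMono m n p hmn)),
      card_strictMono]
  · have hm : 1 ≤ m := by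
      rcases Nat.eq_zero_or_pos m with h | h
      · subst h; simp at hmn
      · exact h
    have hN : n + p - m * p = 0 := by omega
    rw [hN, Nat.choose_eq_zero_of_lt hm]
    have hEmpty : IsEmpty {g : Fin m → Fin n //
        ∀ i j : Fin m, (i : ℕ) < j → (g i : ℕ) + p + 1 ≤ (g j : ℕ)} := by
      constructor
      rintro ⟨g, hg⟩
      have hlast : m - 1 < m := by omega
      have hlb := gap_lb (fun i => (g i : ℕ)) hg ⟨m - 1, hlast⟩
      have hub : ((g ⟨m - 1, hlast⟩ : Fin n) : ℕ) < n := (g _).2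
      simp only [Fin.val_mk] at hlb
      have he : (m - 1) * (p + 1) = (m - 1) * p + (m - 1) := by ring
      have he2 : m * p = (m - 1) * p + p := by
        have h1 : (m - 1 + 1) * p = (m - 1) * p + p := by ring
        rw [← h1]; congr 1; omega
      omega
    rw [Nat.card_congr (fibStrEquivGap p n m), Nat.card_of_isEmpty]

/-- `c_{k,d}(Γ^p_n) = C(n - (k+d)p + p, k+d) · C(k+d, k)`. -/
theorem cubeCountD_eq (p n k d : ℕ) (hp : 1 ≤ p) :
    cubeCountD p n k d = (n + p - (k + d) * p).choose (k + d) * (k + d).choose k := by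
  rw [cubeCountD, Nat.card_congr (mainEquiv p n k d), Nat.card_eq_fintype_card,
    Fintype.card_sigma]
  have hterm : ∀ t : {t : Fin n → Bool // IsFibStr p t ∧ wt t = k + d},
      Fintype.card {D : Finset (Fin n) //
        D ∈ (Finset.univ.filter fun i => t.1 i = true).powersetCard k} = (k + d).choose k := by
    intro t
    rw [Fintype.card_coe, Finset.card_powersetCard]
    congr 1
    exact t.2.2
  trans ∑ _t : {t : Fin n → Bool // IsFibStr p t ∧ wt t = k + d}, (k + d).choose k
  · refine Finset.sum_congr rfl fun t _ => ?_
    convert hterm t using 2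
  · rw [Finset.sum_const, smul_eq_mul, Finset.card_univ,
      ← Nat.card_eq_fintype_card, countFib p n (k + d) hp]
end

section
/- For every integer p ≥ 1 and every integer n ≥ 1, the Wiener index of the Fibonacci p-cube satisfies W(Γ^p_n) = F^p_{n+p+1} · Σ_{i=1}^{n} F^p_i F^p_{n−i+1} − Σ_{i=1}^{n} (F^p_i F^p_{n−i+1})^2. -/
namespace FibAux

variable (p : ℕ)

def cnt (m : ℕ) : ℕ := (Finset.univ.filter fun u : Fin m → Bool => IsFibStr p u).card

def cntGe (t m : ℕ) : ℕ :=
  (Finset.univ.filter fun u : Fin m → Bool =>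
    IsFibStr p u ∧ ∀ i : Fin m, u i = true → t ≤ (i : ℕ)).card

lemma cons_card (m : ℕ) (P : (Fin (m + 1) → Bool) → Prop) [DecidablePred P] :
    (Finset.univ.filter P).card
      = (Finset.univ.filter fun v : Fin m → Bool => P (Fin.cons false v)).card
        + (Finset.univ.filter fun v : Fin m → Bool => P (Fin.cons true v)).card := by
  classical
  rw [Finset.card_filter, Finset.card_filter, Finset.card_filter]
  rw [← Fintype.sum_equiv (Fin.consEquiv fun _ => Bool)
        (fun bv => if P ((Fin.consEquiv fun _ => Bool) bv) then 1 else 0)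
        (fun u => if P u then 1 else 0) (fun bv => rfl)]
  rw [Fintype.sum_prod_type, Fintype.sum_bool]
  rw [add_comm]
  rfl

lemma isFibStr_cons_false {m : ℕ} (v : Fin m → Bool) :
    IsFibStr p (Fin.cons false v) ↔ IsFibStr p v := by
  constructor
  · intro h i j hi hj hij
    have := h i.succ j.succ (by simpa using hi) (by simpa using hj)
      (by simpa [Fin.val_succ] using hij)
    simp [Fin.val_succ] at this
    omega
  · intro h i j hi hj hij
    induction i using Fin.cases with
    | zero => simp at hi
    | succ i' =>
      induction j using Fin.cases with
      | zero => simp [Fin.val_succ] at hij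
      | succ j' =>
        have := h i' j' (by simpa using hi) (by simpa using hj)
          (by simpa [Fin.val_succ] using hij)
        simp [Fin.val_succ]
        omega

lemma isFibStr_cons_true {m : ℕ} (v : Fin m → Bool) :
    IsFibStr p (Fin.cons true v) ↔ (IsFibStr p v ∧ ∀ i : Fin m, v i = true → p ≤ (i : ℕ)) := by
  constructor
  · intro h
    constructor
    · intro i j hi hj hij
      have := h i.succ j.succ (by simpa using hi) (by simpa using hj)
        (by simpa [Fin.val_succ] using hij)
      simp [Fin.val_succ] at this
      omega
    · intro i hi
      have := h 0 i.succ (by simp) (by simpa using hi) (by simp [Fin.val_succ])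
      simpa [Fin.val_succ] using this
  · rintro ⟨h1, h2⟩ i j hi hj hij
    induction i using Fin.cases with
    | zero =>
      induction j using Fin.cases with
      | zero => simp at hij
      | succ j' =>
        have := h2 j' (by simpa using hj)
        simp [Fin.val_succ]
        omega
    | succ i' =>
      induction j using Fin.cases with
      | zero => simp [Fin.val_succ] at hij
      | succ j' =>
        have := h1 i' j' (by simpa using hi) (by simpa using hj)
          (by simpa [Fin.val_succ] using hij)
        simp [Fin.val_succ]
        omega

lemma cnt_zero : cnt p 0 = 1 := by
  rw [cnt, Finset.filter_true_of_mem (by intro u _ i; exact i.elim0)]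
  simp

lemma cntGe_zero_m (t : ℕ) : cntGe p t 0 = 1 := by
  rw [cntGe, Finset.filter_true_of_mem
    (by intro u _; exact ⟨fun i => i.elim0, fun i => i.elim0⟩)]
  simp

lemma cntGe_zero_t (m : ℕ) : cntGe p 0 m = cnt p m := by
  rw [cntGe, cnt]
  congr 1
  apply Finset.filter_congr
  intro u _
  simp

lemma cntGe_succ (t m : ℕ) : cntGe p (t + 1) (m + 1) = cntGe p t m := by
  rw [cntGe, cons_card]
  have h2 : (Finset.univ.filter fun v : Fin m → Bool =>
      IsFibStr p (Fin.cons true v) ∧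
        ∀ i : Fin (m + 1), (Fin.cons true v : Fin (m + 1) → Bool) i = true
          → t + 1 ≤ (i : ℕ)).card = 0 := by
    rw [Finset.card_eq_zero, Finset.filter_eq_empty_iff]
    rintro v - ⟨-, h⟩
    have := h 0 (by simp)
    simp at this
  rw [h2, add_zero, cntGe]
  congr 1
  apply Finset.filter_congr
  intro v _
  simp only [isFibStr_cons_false]
  constructor
  · rintro ⟨h1, h2⟩
    refine ⟨h1, fun i hi => ?_⟩
    have := h2 i.succ (by simpa using hi)
    simp [Fin.val_succ] at this
    omega
  · rintro ⟨h1, h2⟩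
    refine ⟨h1, fun i hi => ?_⟩
    induction i using Fin.cases with
    | zero => simp at hi
    | succ i' =>
      have := h2 i' (by simpa using hi)
      simp [Fin.val_succ]
      omega

lemma cnt_succ (m : ℕ) : cnt p (m + 1) = cnt p m + cntGe p p m := by
  rw [cnt, cons_card]
  congr 1
  · rw [cnt]; congr 1
    apply Finset.filter_congr
    intro v _
    simp [isFibStr_cons_false]
  · rw [cntGe]; congr 1
    apply Finset.filter_congr
    intro v _
    simp [isFibStr_cons_true]

lemma cntGe_eq : ∀ t m, cntGe p t m = if m ≤ t then 1 else cnt p (m - t) := by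
  intro t
  induction t with
  | zero =>
    intro m
    rw [cntGe_zero_t]
    rcases Nat.eq_zero_or_pos m with h | h
    · subst h; rw [if_pos (le_refl 0), cnt_zero]
    · rw [if_neg (by omega), Nat.sub_zero]
  | succ t ih =>
    intro m
    cases m with
    | zero => rw [cntGe_zero_m, if_pos (by omega)]
    | succ m =>
      rw [cntGe_succ, ih m]
      have : m + 1 - (t + 1) = m - t := by omega
      rw [this]
      congr 1
      simp only [eq_iff_iff]
      omega

end FibAux

namespace FibAux

lemma fibP_eq_one (p : ℕ) (hp : 1 ≤ p) : ∀ m, 1 ≤ m → m ≤ p + 1 → fibP p m = 1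
  | m + 1, _, h2 => by
    rw [fibP]
    by_cases h : m + 1 ≤ p
    · simp [h]
    · have hm : m = p := by omega
      rw [if_neg h, hm, fibP_eq_one p hp p hp (by omega), Nat.sub_self]
      simp [fibP]

lemma cnt_eq (p : ℕ) (hp : 1 ≤ p) : ∀ m, cnt p m = fibP p (m + p + 1)
  | 0 => by
    rw [cnt_zero]
    have h0 : 0 + p + 1 = p + 1 := by omega
    rw [h0]
    exact (fibP_eq_one p hp (p + 1) (by omega) (by omega)).symm
  | m + 1 => by
    rw [cnt_succ, cnt_eq p hp m, cntGe_eq]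
    have e1 : m + 1 + p + 1 = (m + p + 1) + 1 := by omega
    have hrec : fibP p (m + 1 + p + 1) = fibP p (m + p + 1) + fibP p (m + 1) := by
      rw [e1, fibP, if_neg (by omega)]
      have : m + p + 1 - p = m + 1 := by omega
      rw [this]
    rw [hrec]
    congr 1
    split_ifs with h
    · exact (fibP_eq_one p hp (m + 1) (by omega) (by omega)).symm
    · rw [cnt_eq p hp (m - p)]
      congr 1
      omega

lemma cntGe_p (p : ℕ) (hp : 1 ≤ p) (m : ℕ) : cntGe p p m = fibP p (m + 1) := by
  rw [cntGe_eq]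
  split_ifs with h
  · exact (fibP_eq_one p hp (m + 1) (by omega) (by omega)).symm
  · rw [cnt_eq p hp]
    congr 1
    omega

/-- reversal of a string -/
def rv {m : ℕ} (u : Fin m → Bool) : Fin m → Bool := fun i => u i.rev

lemma rv_rv {m : ℕ} (u : Fin m → Bool) : rv (rv u) = u := by
  funext i
  simp [rv, Fin.rev_rev]

lemma isFibStr_rv {m : ℕ} (p : ℕ) {u : Fin m → Bool} (h : IsFibStr p u) :
    IsFibStr p (rv u) := by
  intro i j hi hj hij
  have h1 : (j.rev : ℕ) < (i.rev : ℕ) := by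
    have := i.isLt; have := j.isLt
    simp [Fin.val_rev]
    omega
  have := h j.rev i.rev hj hi h1
  have := i.isLt; have := j.isLt
  simp [Fin.val_rev] at *
  omega

lemma cntLe_card (p t m : ℕ) :
    (Finset.univ.filter fun u : Fin m → Bool =>
        IsFibStr p u ∧ ∀ i : Fin m, u i = true → (i : ℕ) + t + 1 ≤ m).card = cntGe p t m := by
  rw [cntGe]
  apply Finset.card_nbij' rv rv
  · intro u hu
    simp only [Finset.mem_coe, Finset.mem_filter, Finset.mem_univ, true_and] at hu ⊢
    refine ⟨isFibStr_rv p hu.1, fun i hi => ?_⟩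
    have := hu.2 i.rev hi
    have := i.isLt
    simp [Fin.val_rev] at *
    omega
  · intro u hu
    simp only [Finset.mem_coe, Finset.mem_filter, Finset.mem_univ, true_and] at hu ⊢
    refine ⟨isFibStr_rv p hu.1, fun i hi => ?_⟩
    have := hu.2 i.rev hi
    have := i.isLt
    simp [Fin.val_rev] at *
    omega
  · intro u _; exact rv_rv u
  · intro u _; exact rv_rv u

end FibAux

namespace FibAux

def glue (j0 k n : ℕ) (hk : n = j0 + 1 + k) (w : Fin j0 → Bool) (x : Fin k → Bool) :
    Fin n → Bool := fun i =>
  if h1 : (i : ℕ) < j0 then w ⟨(i : ℕ), h1⟩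
  else if h2 : (i : ℕ) < j0 + 1 then true
  else x ⟨(i : ℕ) - (j0 + 1), by omega⟩

lemma glue_lt {j0 k n : ℕ} (hk : n = j0 + 1 + k) (w : Fin j0 → Bool) (x : Fin k → Bool)
    (i : Fin n) (h : (i : ℕ) < j0) : glue j0 k n hk w x i = w ⟨(i : ℕ), h⟩ := by
  simp only [glue]
  rw [dif_pos h]

lemma glue_mid {j0 k n : ℕ} (hk : n = j0 + 1 + k) (w : Fin j0 → Bool) (x : Fin k → Bool)
    (i : Fin n) (h : (i : ℕ) = j0) : glue j0 k n hk w x i = true := by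
  simp only [glue]
  rw [dif_neg (by omega), dif_pos (by omega)]

lemma glue_gt {j0 k n : ℕ} (hk : n = j0 + 1 + k) (w : Fin j0 → Bool) (x : Fin k → Bool)
    (i : Fin n) (h : j0 < (i : ℕ)) :
    glue j0 k n hk w x i = x ⟨(i : ℕ) - (j0 + 1), by omega⟩ := by
  simp only [glue]
  rw [dif_neg (by omega), dif_neg (by omega)]

lemma split_card (p j0 k n : ℕ) (hk : n = j0 + 1 + k) (j : Fin n) (hj : (j : ℕ) = j0) :
    (Finset.univ.filter fun u : Fin n → Bool => IsFibStr p u ∧ u j = true).card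
      = (Finset.univ.filter fun w : Fin j0 → Bool =>
          IsFibStr p w ∧ ∀ i : Fin j0, w i = true → (i : ℕ) + p + 1 ≤ j0).card
        * cntGe p p k := by
  rw [cntGe, ← Finset.card_product]
  apply Finset.card_nbij'
    (fun u : Fin n → Bool =>
      ((fun i => u ⟨(i : ℕ), by omega⟩ : Fin j0 → Bool),
       (fun i => u ⟨j0 + 1 + (i : ℕ), by omega⟩ : Fin k → Bool)))
    (fun wx : (Fin j0 → Bool) × (Fin k → Bool) => glue j0 k n hk wx.1 wx.2)
  · intro u hu
    simp only [Finset.mem_coe, Finset.mem_filter, Finset.mem_univ, true_and, Finset.mem_product] at hu ⊢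
    obtain ⟨hfib, hj1⟩ := hu
    refine ⟨⟨?_, ?_⟩, ?_, ?_⟩
    · intro a b ha hb hab
      exact hfib ⟨a, by omega⟩ ⟨b, by omega⟩ ha hb hab
    · intro a ha
      have h1 := hfib ⟨(a : ℕ), by omega⟩ j ha hj1 (show (a : ℕ) < (j : ℕ) by omega)
      have h2 : (a : ℕ) + p + 1 ≤ (j : ℕ) := h1
      omega
    · intro a b ha hb hab
      have h1 := hfib ⟨j0 + 1 + (a : ℕ), by omega⟩ ⟨j0 + 1 + (b : ℕ), by omega⟩ ha hb
        (show j0 + 1 + (a : ℕ) < j0 + 1 + (b : ℕ) by omega)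
      have h2 : j0 + 1 + (a : ℕ) + p + 1 ≤ j0 + 1 + (b : ℕ) := h1
      omega
    · intro a ha
      have h1 := hfib j ⟨j0 + 1 + (a : ℕ), by omega⟩ hj1 ha
        (show (j : ℕ) < j0 + 1 + (a : ℕ) by omega)
      have h2 : (j : ℕ) + p + 1 ≤ j0 + 1 + (a : ℕ) := h1
      omega
  · intro wx hwx
    simp only [Finset.mem_coe, Finset.mem_filter, Finset.mem_univ, true_and, Finset.mem_product] at hwx ⊢
    obtain ⟨⟨hw1, hw2⟩, hx1, hx2⟩ := hwx
    constructor
    · intro a b ha hb hab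
      rcases lt_trichotomy (a : ℕ) j0 with ca | ca | ca
      · rw [glue_lt hk wx.1 wx.2 a ca] at ha
        rcases lt_trichotomy (b : ℕ) j0 with cb | cb | cb
        · rw [glue_lt hk wx.1 wx.2 b cb] at hb
          exact hw1 ⟨a, ca⟩ ⟨b, cb⟩ ha hb hab
        · have h2 : (a : ℕ) + p + 1 ≤ j0 := hw2 ⟨(a : ℕ), ca⟩ ha
          omega
        · have h2 : (a : ℕ) + p + 1 ≤ j0 := hw2 ⟨(a : ℕ), ca⟩ ha
          omega
      · rcases lt_trichotomy (b : ℕ) j0 with cb | cb | cb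
        · omega
        · omega
        · rw [glue_gt hk wx.1 wx.2 b cb] at hb
          have h2 : p ≤ (b : ℕ) - (j0 + 1) := hx2 _ hb
          omega
      · rw [glue_gt hk wx.1 wx.2 a ca] at ha
        rcases lt_trichotomy (b : ℕ) j0 with cb | cb | cb
        · omega
        · omega
        · rw [glue_gt hk wx.1 wx.2 b cb] at hb
          have h1 := hx1 ⟨(a : ℕ) - (j0 + 1), by omega⟩ ⟨(b : ℕ) - (j0 + 1), by omega⟩ ha hb
            (show (a : ℕ) - (j0 + 1) < (b : ℕ) - (j0 + 1) by omega)
          have h2 : (a : ℕ) - (j0 + 1) + p + 1 ≤ (b : ℕ) - (j0 + 1) := h1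
          omega
    · exact glue_mid hk wx.1 wx.2 j hj
  · intro u hu
    simp only [Finset.mem_coe, Finset.mem_filter, Finset.mem_univ, true_and] at hu
    funext i
    beta_reduce
    rcases lt_trichotomy (i : ℕ) j0 with c | c | c
    · rw [glue_lt hk _ _ i c]
    · rw [glue_mid hk _ _ i c]
      have hij : i = j := Fin.ext (by omega)
      rw [hij]
      exact hu.2.symm
    · rw [glue_gt hk _ _ i c]
      exact congrArg u (Fin.ext (show j0 + 1 + ((i : ℕ) - (j0 + 1)) = (i : ℕ) by omega))
  · intro wx hwx
    refine Prod.ext ?_ ?_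
    · funext i
      exact (glue_lt hk wx.1 wx.2 ⟨(i : ℕ), by omega⟩ i.isLt).trans
        (congrArg wx.1 (Fin.ext rfl))
    · funext i
      exact (glue_gt hk wx.1 wx.2 ⟨j0 + 1 + (i : ℕ), by omega⟩
          (show j0 < j0 + 1 + (i : ℕ) by omega)).trans
        (congrArg wx.2 (Fin.ext (show j0 + 1 + (i : ℕ) - (j0 + 1) = (i : ℕ) by omega)))

lemma posCount (p : ℕ) (hp : 1 ≤ p) {n : ℕ} (j : Fin n) :
    (Finset.univ.filter fun u : Fin n → Bool => IsFibStr p u ∧ u j = true).card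
      = fibP p ((j : ℕ) + 1) * fibP p (n - (j : ℕ)) := by
  have hk : n = (j : ℕ) + 1 + (n - 1 - (j : ℕ)) := by omega
  rw [split_card p (j : ℕ) (n - 1 - (j : ℕ)) n hk j rfl, cntLe_card p p (j : ℕ),
    cntGe_p p hp, cntGe_p p hp]
  congr 2
  omega

end FibAux



namespace FibAux

lemma adj_iff {p n : ℕ} (u v : {u : Fin n → Bool // IsFibStr p u}) :
    (FibCube p n).Adj u v ↔ hammingDist u.1 v.1 = 1 := Iff.rfl

lemma flip_false {p n : ℕ} {u : Fin n → Bool} (h : IsFibStr p u) (j : Fin n) :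
    IsFibStr p (Function.update u j false) := by
  intro a b ha hb hab
  have key : ∀ i, Function.update u j false i = true → u i = true := by
    intro i hi
    by_cases hij : i = j
    · subst hij; rw [Function.update_self] at hi; exact absurd hi (by simp)
    · rwa [Function.update_of_ne hij] at hi
  exact h a b (key a ha) (key b hb) hab

lemma flip_true {p n : ℕ} {u v : Fin n → Bool} (hv : IsFibStr p v)
    (hle : ∀ i, u i = true → v i = true) {j : Fin n} (hvj : v j = true) :
    IsFibStr p (Function.update u j true) := by
  intro a b ha hb hab
  have key : ∀ i, Function.update u j true i = true → v i = true := by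
    intro i hi
    by_cases hij : i = j
    · subst hij; exact hvj
    · rw [Function.update_of_ne hij] at hi; exact hle i hi
  exact hv a b (key a ha) (key b hb) hab

lemma hamming_update {n : ℕ} (u v : Fin n → Bool) (j : Fin n) (hne : u j ≠ v j) :
    hammingDist (Function.update u j (v j)) v + 1 = hammingDist u v := by
  classical
  have hset : (Finset.univ.filter fun i => Function.update u j (v j) i ≠ v i)
      = (Finset.univ.filter fun i => u i ≠ v i).erase j := by
    ext i
    by_cases hij : i = j
    · subst hij
      simp [Function.update_self]
    · simp [Function.update_of_ne hij, hij]
  have hmem : j ∈ Finset.univ.filter fun i => u i ≠ v i := by simp [hne]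
  show (Finset.univ.filter fun i => Function.update u j (v j) i ≠ v i).card + 1
      = (Finset.univ.filter fun i => u i ≠ v i).card
  rw [hset, Finset.card_erase_of_mem hmem]
  have : 1 ≤ (Finset.univ.filter fun i => u i ≠ v i).card :=
    Finset.card_pos.mpr ⟨j, hmem⟩
  omega

lemma hamming_update_self {n : ℕ} (u : Fin n → Bool) (j : Fin n) (b : Bool) (hb : u j ≠ b) :
    hammingDist u (Function.update u j b) = 1 := by
  classical
  have hset : (Finset.univ.filter fun i => u i ≠ Function.update u j b i) = {j} := by
    ext i
    by_cases hij : i = j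
    · subst hij
      simp [Function.update_self, hb]
    · simp [Function.update_of_ne hij, hij]
  show (Finset.univ.filter fun i => u i ≠ Function.update u j b i).card = 1
  rw [hset, Finset.card_singleton]

lemma exists_walk (p n : ℕ) :
    ∀ k (u v : {u : Fin n → Bool // IsFibStr p u}), hammingDist u.1 v.1 ≤ k →
      ∃ w : (FibCube p n).Walk u v, w.length ≤ k := by
  intro k
  induction k with
  | zero =>
    intro u v h
    have h0 : u.1 = v.1 := hammingDist_eq_zero.mp (Nat.le_antisymm h (Nat.zero_le _))
    have : u = v := Subtype.ext h0
    subst this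
    exact ⟨SimpleGraph.Walk.nil, by simp⟩
  | succ k ih =>
    intro u v h
    by_cases huv : u = v
    · subst huv
      exact ⟨SimpleGraph.Walk.nil, by simp⟩
    · have hex : ∃ j, u.1 j ≠ v.1 j := by
        by_contra hc
        push_neg at hc
        exact huv (Subtype.ext (funext hc))
      have step : ∀ j : Fin n, u.1 j ≠ v.1 j → IsFibStr p (Function.update u.1 j (v.1 j)) →
          ∃ w : (FibCube p n).Walk u v, w.length ≤ k + 1 := by
        intro j hj hfib
        set u' : {u : Fin n → Bool // IsFibStr p u} := ⟨Function.update u.1 j (v.1 j), hfib⟩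
        have hadj : (FibCube p n).Adj u u' :=
          (adj_iff u u').mpr (hamming_update_self u.1 j (v.1 j) hj)
        have hlt : hammingDist u'.1 v.1 ≤ k := by
          have h2 := hamming_update u.1 v.1 j hj
          have h3 : hammingDist u'.1 v.1
              = hammingDist (Function.update u.1 j (v.1 j)) v.1 := rfl
          omega
        obtain ⟨w', hw'⟩ := ih u' v hlt
        exact ⟨SimpleGraph.Walk.cons hadj w', by simp [SimpleGraph.Walk.length_cons]; omega⟩
      by_cases hA : ∃ j, u.1 j = true ∧ v.1 j = false
      · obtain ⟨j, hj1, hj2⟩ := hA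
        apply step j (by rw [hj1, hj2]; simp)
        rw [hj2]
        exact flip_false u.2 j
      · push_neg at hA
        have hle : ∀ i, u.1 i = true → v.1 i = true := by
          intro i hi
          have := hA i hi
          cases hv : v.1 i
          · exact absurd hv this
          · rfl
        obtain ⟨j, hj⟩ := hex
        have hvj : v.1 j = true := by
          cases hu0 : u.1 j
          · cases hv0 : v.1 j
            · exact absurd (hu0.trans hv0.symm) hj
            · rfl
          · exact hle j hu0
        apply step j hj
        rw [hvj]
        exact flip_true v.2 hle hvj

lemma walk_lb {p n : ℕ} : ∀ {u v : {u : Fin n → Bool // IsFibStr p u}}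
    (w : (FibCube p n).Walk u v), hammingDist u.1 v.1 ≤ w.length := by
  intro u v w
  induction w with
  | nil => simp
  | @cons a b c h q ih =>
    have h1 : hammingDist a.1 b.1 = 1 := (adj_iff a b).mp h
    calc hammingDist a.1 c.1 ≤ hammingDist a.1 b.1 + hammingDist b.1 c.1 :=
        hammingDist_triangle _ _ _
      _ ≤ 1 + q.length := by rw [h1]; omega
      _ = (SimpleGraph.Walk.cons h q).length := by
        rw [SimpleGraph.Walk.length_cons]; omega

lemma dist_eq {p n : ℕ} (u v : {u : Fin n → Bool // IsFibStr p u}) :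
    (FibCube p n).dist u v = hammingDist u.1 v.1 := by
  obtain ⟨w, hw⟩ := exists_walk p n (hammingDist u.1 v.1) u v le_rfl
  apply le_antisymm
  · exact (SimpleGraph.dist_le w).trans hw
  · obtain ⟨w', hw'⟩ := (SimpleGraph.Reachable.exists_walk_length_eq_dist ⟨w⟩ :
      ∃ w' : (FibCube p n).Walk u v, w'.length = (FibCube p n).dist u v)
    calc hammingDist u.1 v.1 ≤ w'.length := walk_lb w'
      _ = (FibCube p n).dist u v := hw'

end FibAux

namespace FibAux

lemma reindex (g : ℕ → ℤ) (n : ℕ) :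
    ∑ j ∈ Finset.range n, g j = ∑ i ∈ Finset.Icc 1 n, g (i - 1) := by
  apply Finset.sum_nbij' (fun j => j + 1) (fun i => i - 1)
  · intro a ha; simp at ha ⊢; omega
  · intro a ha; simp at ha ⊢; omega
  · intro a ha; simp
  · intro a ha; simp at ha ⊢; omega
  · intro a ha; simp

lemma card_subtype_filter (p n : ℕ) (j : Fin n) :
    (Finset.univ.filter fun v : {u : Fin n → Bool // IsFibStr p u} => v.1 j = true).card
      = (Finset.univ.filter fun u : Fin n → Bool => IsFibStr p u ∧ u j = true).card := by
  apply Finset.card_bij (fun v _ => v.1)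
  · intro v hv
    simp only [Finset.mem_filter, Finset.mem_univ, true_and] at hv ⊢
    exact ⟨v.2, hv⟩
  · intro v1 h1 v2 h2 h
    exact Subtype.ext h
  · intro u hu
    simp only [Finset.mem_filter, Finset.mem_univ, true_and] at hu
    exact ⟨⟨u, hu.1⟩, by simp [hu.2], rfl⟩

end FibAux


open FibAux

/-- Wiener index of `Γ^p_n`:
`W(Γ^p_n) = F^p_{n+p+1}·Σ_{i=1}^n F^p_i F^p_{n-i+1} - Σ_{i=1}^n (F^p_i F^p_{n-i+1})²`.
The Wiener index is expressed as the sum over unordered pairs of vertices of the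
graph distance (diagonal pairs contribute `0`). -/
theorem wiener_fibCube (p n : ℕ) (hp : 1 ≤ p) (hn : 1 ≤ n) :
    ∑ e ∈ (Finset.univ : Finset {u : Fin n → Bool // IsFibStr p u}).sym2,
      Sym2.lift ⟨fun u v => ((FibCube p n).dist u v : ℤ),
        fun u v => by simp [SimpleGraph.dist_comm]⟩ e =
      (fibP p (n + p + 1) : ℤ) *
          (∑ i ∈ Finset.Icc 1 n, (fibP p i : ℤ) * (fibP p (n - i + 1) : ℤ)) -
        ∑ i ∈ Finset.Icc 1 n, ((fibP p i : ℤ) * (fibP p (n - i + 1) : ℤ)) ^ 2 := by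
  classical
  set V := {u : Fin n → Bool // IsFibStr p u} with hV
  set ord : V → ℕ := fun v => ((Fintype.equivFin V) v : ℕ) with hord
  have hordinj : Function.Injective ord := by
    intro a b h
    exact (Fintype.equivFin V).injective (Fin.ext h)
  set L : Sym2 V → ℤ := Sym2.lift ⟨fun u v => ((FibCube p n).dist u v : ℤ),
    fun u v => by simp [SimpleGraph.dist_comm]⟩ with hL
  set f : V → V → ℤ := fun u v => (hammingDist u.1 v.1 : ℤ) with hf
  have hLmk : ∀ u v : V, L s(u, v) = f u v := by
    intro u v
    rw [hL, Sym2.lift_mk]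
    simp only [hf]
    rw [dist_eq u v]
  -- step 1: kill diagonal
  have h1 : ∑ e ∈ (Finset.univ : Finset V).sym2, L e
      = ∑ e ∈ (Finset.univ : Finset V).sym2.filter (fun e => ¬ e.IsDiag), L e := by
    rw [← Finset.sum_filter_add_sum_filter_not ((Finset.univ : Finset V).sym2)
      (fun e => e.IsDiag) L]
    have hz : ∑ e ∈ (Finset.univ : Finset V).sym2.filter (fun e => e.IsDiag), L e = 0 := by
      apply Finset.sum_eq_zero
      intro e he
      induction e using Sym2.ind with
      | _ a b =>
        rw [Finset.mem_filter] at he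
        have hab : a = b := (Sym2.mk_isDiag_iff).mp he.2
        subst hab
        rw [hLmk]
        simp [hf]
    rw [hz, zero_add]
  -- step 2: to ordered pairs below the diagonal
  have h2 : ∑ e ∈ (Finset.univ : Finset V).sym2.filter (fun e => ¬ e.IsDiag), L e
      = ∑ uv ∈ (Finset.univ : Finset V).offDiag.filter (fun uv => ord uv.1 < ord uv.2),
          f uv.1 uv.2 := by
    symm
    apply Finset.sum_bij (fun (uv : V × V) _ => s(uv.1, uv.2))
    · intro uv huv
      simp only [Finset.mem_filter, Finset.mem_offDiag, Finset.mem_univ, true_and] at huv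
      simp only [Finset.mem_filter, Finset.mk_mem_sym2_iff, Finset.mem_univ, true_and,
        Sym2.mk_isDiag_iff]
      exact huv.1
    · intro a ha b hb hab
      simp only [Finset.mem_filter, Finset.mem_offDiag, Finset.mem_univ, true_and] at ha hb
      rw [Sym2.eq_iff] at hab
      rcases hab with ⟨h1, h2⟩ | ⟨h1, h2⟩
      · exact Prod.ext h1 h2
      · exfalso
        rw [h1, h2] at ha
        omega
    · intro e he
      simp only [Finset.mem_filter] at he
      induction e using Sym2.ind with
      | _ a b =>
        have hab : a ≠ b := by
          intro h
          exact he.2 (by rw [h]; exact Sym2.mk_isDiag_iff.mpr rfl)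
        have hord : ord a ≠ ord b := fun h => hab (hordinj h)
        rcases Nat.lt_or_ge (ord a) (ord b) with hlt | hge
        · exact ⟨(a, b), by simp [Finset.mem_offDiag, hab, hlt], rfl⟩
        · refine ⟨(b, a), by simp [Finset.mem_offDiag, Ne.symm hab]; omega, Sym2.eq_swap⟩
    · intro uv huv
      exact (hLmk uv.1 uv.2).symm
  -- step 3: doubling
  have h3 : ∑ uv ∈ (Finset.univ : Finset V).offDiag.filter (fun uv => ord uv.1 < ord uv.2),
        f uv.1 uv.2
      = ∑ uv ∈ (Finset.univ : Finset V).offDiag.filter (fun uv => ¬ ord uv.1 < ord uv.2),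
        f uv.1 uv.2 := by
    apply Finset.sum_nbij' (fun uv => (uv.2, uv.1)) (fun uv => (uv.2, uv.1))
    · intro a ha
      simp only [Finset.mem_filter, Finset.mem_offDiag, Finset.mem_univ, true_and] at ha ⊢
      exact ⟨(Ne.symm ha.1), by omega⟩
    · intro a ha
      simp only [Finset.mem_filter, Finset.mem_offDiag, Finset.mem_univ, true_and] at ha ⊢
      refine ⟨(Ne.symm ha.1), ?_⟩
      have : ord a.1 ≠ ord a.2 := fun h => ha.1 (hordinj h)
      omega
    · intro a ha; rfl
    · intro a ha; rfl
    · intro a ha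
      simp only [hf]
      rw [hammingDist_comm]
  have h4 : (2 : ℤ) * ∑ uv ∈ (Finset.univ : Finset V).offDiag.filter
        (fun uv => ord uv.1 < ord uv.2), f uv.1 uv.2
      = ∑ uv ∈ (Finset.univ : Finset V).offDiag, f uv.1 uv.2 := by
    rw [two_mul]
    nth_rewrite 2 [h3]
    exact Finset.sum_filter_add_sum_filter_not _ _ _
  have h5 : ∑ uv ∈ (Finset.univ : Finset V).offDiag, f uv.1 uv.2
      = ∑ u : V, ∑ v : V, f u v := by
    have hoff : ((Finset.univ : Finset V) ×ˢ Finset.univ).filter (fun uv => ¬ uv.1 = uv.2)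
        = (Finset.univ : Finset V).offDiag := by
      ext uv
      simp [Finset.mem_offDiag]
    have hdiag : ∑ uv ∈ ((Finset.univ : Finset V) ×ˢ Finset.univ).filter
        (fun uv => uv.1 = uv.2), f uv.1 uv.2 = 0 := by
      apply Finset.sum_eq_zero
      intro uv huv
      rw [Finset.mem_filter] at huv
      simp only [hf]
      rw [huv.2]
      simp
    have hsplit := Finset.sum_filter_add_sum_filter_not
      ((Finset.univ : Finset V) ×ˢ Finset.univ) (fun uv => uv.1 = uv.2)
      (fun uv => f uv.1 uv.2)
    rw [hoff, hdiag, zero_add] at hsplit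
    rw [hsplit, Finset.sum_product']
  -- step 4: expand the hamming distance coordinatewise
  have hfexp : ∀ u v : V, f u v
      = ∑ j : Fin n, ((if u.1 j = true then (1 : ℤ) else 0) * (if v.1 j = false then 1 else 0)
          + (if u.1 j = false then (1 : ℤ) else 0) * (if v.1 j = true then 1 else 0)) := by
    intro u v
    simp only [hf]
    have hcard : (hammingDist u.1 v.1 : ℤ)
        = ∑ j : Fin n, (if u.1 j ≠ v.1 j then (1 : ℤ) else 0) := by
      rw [hammingDist]
      exact Finset.natCast_card_filter _ _
    rw [hcard]
    apply Finset.sum_congr rfl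
    intro j _
    cases hu : u.1 j <;> cases hv : v.1 j <;> simp
  have hD : ∑ u : V, ∑ v : V, f u v
      = ∑ j : Fin n, 2 * ((∑ u : V, if u.1 j = true then (1 : ℤ) else 0)
          * (∑ v : V, if v.1 j = false then (1 : ℤ) else 0)) := by
    have step1 : ∑ u : V, ∑ v : V, f u v
        = ∑ u : V, ∑ j : Fin n,
            ∑ v : V, ((if u.1 j = true then (1 : ℤ) else 0) * (if v.1 j = false then 1 else 0)
              + (if u.1 j = false then (1 : ℤ) else 0) * (if v.1 j = true then 1 else 0)) := by
      apply Finset.sum_congr rfl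
      intro u _
      rw [Finset.sum_congr rfl (fun v _ => hfexp u v), Finset.sum_comm]
    rw [step1, Finset.sum_comm]
    apply Finset.sum_congr rfl
    intro j _
    have inner : ∀ u : V,
        ∑ v : V, ((if u.1 j = true then (1 : ℤ) else 0) * (if v.1 j = false then 1 else 0)
            + (if u.1 j = false then (1 : ℤ) else 0) * (if v.1 j = true then 1 else 0))
        = (if u.1 j = true then (1 : ℤ) else 0) * (∑ v : V, if v.1 j = false then (1 : ℤ) else 0)
          + (if u.1 j = false then (1 : ℤ) else 0)
            * (∑ v : V, if v.1 j = true then (1 : ℤ) else 0) := by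
      intro u
      rw [Finset.sum_add_distrib, ← Finset.mul_sum, ← Finset.mul_sum]
    rw [Finset.sum_congr rfl (fun u _ => inner u), Finset.sum_add_distrib,
      ← Finset.sum_mul, ← Finset.sum_mul]
    ring
  -- step 5: the counts
  have hSA : ∀ j : Fin n, (∑ u : V, if u.1 j = true then (1 : ℤ) else 0)
      = ((fibP p ((j : ℕ) + 1) * fibP p (n - (j : ℕ)) : ℕ) : ℤ) := by
    intro j
    rw [Finset.sum_boole]
    have := (card_subtype_filter p n j).trans (posCount p hp j)
    exact_mod_cast congrArg (Nat.cast : ℕ → ℤ) this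
  have hSB : ∀ j : Fin n, (∑ v : V, if v.1 j = false then (1 : ℤ) else 0)
      = (Fintype.card V : ℤ) - ((fibP p ((j : ℕ) + 1) * fibP p (n - (j : ℕ)) : ℕ) : ℤ) := by
    intro j
    rw [Finset.sum_boole, ← hSA j, Finset.sum_boole]
    have hfc : (Finset.univ.filter fun v : V => v.1 j = false)
        = (Finset.univ.filter fun v : V => ¬ v.1 j = true) := by
      apply Finset.filter_congr
      intro v _
      simp
    have hcc := Finset.card_filter_add_card_filter_not
      (s := (Finset.univ : Finset V)) (p := fun v : V => v.1 j = true)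
    rw [Finset.card_univ] at hcc
    rw [hfc]
    push_cast
    omega
  -- assemble
  rw [h1, h2]
  have h2S := h4.trans (h5.trans hD)
  have hS : ∑ uv ∈ (Finset.univ : Finset V).offDiag.filter (fun uv => ord uv.1 < ord uv.2),
        f uv.1 uv.2
      = ∑ j : Fin n, ((∑ u : V, if u.1 j = true then (1 : ℤ) else 0)
          * (∑ v : V, if v.1 j = false then (1 : ℤ) else 0)) := by
    rw [← Finset.mul_sum] at h2S
    exact mul_left_cancel₀ two_ne_zero h2S
  rw [hS]
  have hN : ((Fintype.card V : ℕ) : ℤ) = (fibP p (n + p + 1) : ℤ) := by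
    have h0 : Fintype.card V = cnt p n := by
      rw [cnt]
      exact Fintype.card_subtype _
    rw [h0, cnt_eq p hp n]
  have hterm : ∀ j : Fin n, ((∑ u : V, if u.1 j = true then (1 : ℤ) else 0)
      * (∑ v : V, if v.1 j = false then (1 : ℤ) else 0))
      = (fibP p (n + p + 1) : ℤ) * ((fibP p ((j : ℕ) + 1) * fibP p (n - (j : ℕ)) : ℕ) : ℤ)
        - (((fibP p ((j : ℕ) + 1) * fibP p (n - (j : ℕ)) : ℕ) : ℤ)) ^ 2 := by
    intro j
    rw [hSA j, hSB j, hN]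
    ring
  rw [Finset.sum_congr rfl (fun j _ => hterm j), Finset.sum_sub_distrib, ← Finset.mul_sum]
  -- step 6: reindex from Fin n to Icc 1 n
  have hr1 : ∑ j : Fin n, ((fibP p ((j : ℕ) + 1) * fibP p (n - (j : ℕ)) : ℕ) : ℤ)
      = ∑ i ∈ Finset.Icc 1 n, (fibP p i : ℤ) * (fibP p (n - i + 1) : ℤ) := by
    rw [Fin.sum_univ_eq_sum_range (fun m => ((fibP p (m + 1) * fibP p (n - m) : ℕ) : ℤ)) n,
      reindex]
    apply Finset.sum_congr rfl
    intro i hi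
    simp only [Finset.mem_Icc] at hi
    have e1 : i - 1 + 1 = i := by omega
    have e2 : n - (i - 1) = n - i + 1 := by omega
    rw [e1, e2]
    push_cast
    ring
  have hr2 : ∑ j : Fin n, (((fibP p ((j : ℕ) + 1) * fibP p (n - (j : ℕ)) : ℕ) : ℤ)) ^ 2
      = ∑ i ∈ Finset.Icc 1 n, ((fibP p i : ℤ) * (fibP p (n - i + 1) : ℤ)) ^ 2 := by
    rw [Fin.sum_univ_eq_sum_range (fun m => (((fibP p (m + 1) * fibP p (n - m) : ℕ) : ℤ)) ^ 2) n,
      reindex]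
    apply Finset.sum_congr rfl
    intro i hi
    simp only [Finset.mem_Icc] at hi
    have e1 : i - 1 + 1 = i := by omega
    have e2 : n - (i - 1) = n - i + 1 := by omega
    rw [e1, e2]
    push_cast
    ring
  rw [hr1, hr2]
end
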